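/- arXiv:1701.02623 — 8 statements merged into one kernel-verified Lean document; each statement's English description precedes it below -/
import Mathlib

section
/- Let A be a finite set with a Mal'tsev operation m, and let α ≺ β be a prime interval in the lattice of congruences of (A;m). Then for any pair (a,b) ∈ β ∖ α there is an (α,β)-minimal set U such that U ∩ a^α ≠ ∅ and U ∩ b^α ≠ ∅, where a^α denotes the α-block containing a. -/
namespace SBMPaper

variable {A : Type*}

/-- A Mal'tsev operation: `m a b b = m b b a = a`. -/
def IsMaltsevOp (m : A → A → A → A) : Prop :=
  ∀ a b : A, m a b b = a ∧ m b b a = a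

/-- Containment of binary relations. -/
def RelLE (α β : A → A → Prop) : Prop := ∀ a b : A, α a b → β a b

/-- `p(β) ⊆ α` : the unary map `p` maps the relation `β` into `α`. -/
def PolMaps (p : A → A) (β α : A → A → Prop) : Prop :=
  ∀ a b : A, β a b → α (p a) (p b)

/-- `α ≺ β`: a prime (covering) interval with respect to the class `Cong` of congruences. -/
def PrimeCov (Cong : (A → A → Prop) → Prop) (α β : A → A → Prop) : Prop :=
  RelLE α β ∧ α ≠ β ∧
    ∀ γ : A → A → Prop, Cong γ → RelLE α γ → RelLE γ β → γ = α ∨ γ = β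

/-- An `(α,β)`-minimal set with respect to the class `Pol` of unary polynomials:
an image `p(A)` of a unary polynomial with `p(β) ⊄ α`, minimal under inclusion
among all such images. -/
def IsMinSetP (Pol : (A → A) → Prop) (α β : A → A → Prop) (U : Set A) : Prop :=
  (∃ p, Pol p ∧ Set.range p = U ∧ ¬ PolMaps p β α) ∧
  ∀ U' : Set A, (∃ p, Pol p ∧ Set.range p = U' ∧ ¬ PolMaps p β α) → U' ⊆ U → U' = U

/-- Unary polynomials of a Mal'tsev algebra `(A; m)`. -/
inductive MPol (m : A → A → A → A) : (A → A) → Prop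
  | id : MPol m fun x => x
  | const (a : A) : MPol m fun _ => a
  | mc {p q r : A → A} : MPol m p → MPol m q → MPol m r →
      MPol m fun x => m (p x) (q x) (r x)

/-- Congruences of a Mal'tsev algebra `(A; m)`. -/
def IsMCong (m : A → A → A → A) (α : A → A → Prop) : Prop :=
  Equivalence α ∧
  ∀ a a' b b' c c' : A, α a a' → α b b' → α c c' → α (m a b c) (m a' b' c')

/-- A congruence of an algebra with a binary operation `dot` and a ternary operation `m`. -/
def IsCong (dot : A → A → A) (m : A → A → A → A) (α : A → A → Prop) : Prop :=
  Equivalence α ∧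
  (∀ a a' b b' : A, α a a' → α b b' → α (dot a b) (dot a' b')) ∧
  (∀ a a' b b' c c' : A, α a a' → α b b' → α c c' → α (m a b c) (m a' b' c'))

/-- A semilattice block Mal'tsev (SBM) algebra `(A; dot, m)` with witnessing congruence `σ`:
`σ` is a congruence, the operation induced by `dot` on `A/σ` is a semilattice operation,
`dot` is the first projection on `σ`-blocks, `m` is Mal'tsev on `σ`-blocks,
`m(a,b,c) ≡_σ (a·b)·c`, and `x·(x·y) = x·y`. -/
def IsSBM (dot : A → A → A) (m : A → A → A → A) (σ : A → A → Prop) : Prop :=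
  IsCong dot m σ ∧
  (∀ a b : A, σ (dot a b) (dot b a)) ∧
  (∀ a b c : A, σ (dot (dot a b) c) (dot a (dot b c))) ∧
  (∀ a b : A, σ a b → dot a b = a) ∧
  (∀ a b : A, σ a b → m a b b = a ∧ m b b a = a) ∧
  (∀ a b c : A, σ (m a b c) (dot (dot a b) c)) ∧
  (∀ x y : A, dot x (dot x y) = dot x y)

/-- `a` belongs to the greatest `σ`-block `max(A)` of the semilattice `A/σ`. -/
def InMax (dot : A → A → A) (σ : A → A → Prop) (a : A) : Prop :=
  ∀ b : A, σ (dot b a) a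

/-- The equivalence relation `θ_A` whose blocks are `max(A)` and the singletons outside it. -/
def ThetaA (dot : A → A → A) (σ : A → A → Prop) (a b : A) : Prop :=
  a = b ∨ (InMax dot σ a ∧ InMax dot σ b)

/-- Unary polynomials of an SBM algebra `(A; dot, m)`. -/
inductive UPol (dot : A → A → A) (m : A → A → A → A) : (A → A) → Prop
  | id : UPol dot m fun x => x
  | const (a : A) : UPol dot m fun _ => a
  | dotc {p q : A → A} : UPol dot m p → UPol dot m q →
      UPol dot m fun x => dot (p x) (q x)
  | mc {p q r : A → A} : UPol dot m p → UPol dot m q → UPol dot m r →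
      UPol dot m fun x => m (p x) (q x) (r x)

/-- `A` has a minimal (neutral) element. -/
def HasMinElt (dot : A → A → A) : Prop :=
  ∃ a : A, ∀ b : A, dot a b = b ∧ dot b a = b

/-- `a` is an `αβ`-split element. -/
def IsSplit (dot : A → A → A) (α β : A → A → Prop) (a : A) : Prop :=
  ∃ b c : A, β b c ∧ ¬ α (dot a b) (dot a c)

/-- Unary polynomials of a binary relation `S ⊆ A × B`: pairs of maps generated from
the identity and the constant pairs taken from `S`, closed under coordinatewise
`dot` and `m`. -/
inductive BPol {B : Type*} (dA : A → A → A) (mA : A → A → A → A)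
    (dB : B → B → B) (mB : B → B → B → B) (S : A → B → Prop) :
    (A → A) → (B → B) → Prop
  | id : BPol dA mA dB mB S (fun x => x) (fun y => y)
  | const (a : A) (b : B) (h : S a b) : BPol dA mA dB mB S (fun _ => a) (fun _ => b)
  | dotc {p₁ q₁ : A → A} {p₂ q₂ : B → B} : BPol dA mA dB mB S p₁ p₂ →
      BPol dA mA dB mB S q₁ q₂ →
      BPol dA mA dB mB S (fun x => dA (p₁ x) (q₁ x)) (fun y => dB (p₂ y) (q₂ y))
  | mc {p₁ q₁ r₁ : A → A} {p₂ q₂ r₂ : B → B} : BPol dA mA dB mB S p₁ p₂ →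
      BPol dA mA dB mB S q₁ q₂ → BPol dA mA dB mB S r₁ r₂ →
      BPol dA mA dB mB S (fun x => mA (p₁ x) (q₁ x) (r₁ x))
        (fun y => mB (p₂ y) (q₂ y) (r₂ y))

section Subdirect

variable {n : ℕ} {F : Fin n → Type*}

/-- `R` is a subdirect product of the algebras `F 1, …, F n`. -/
def SubdirectProd (dot : ∀ i, F i → F i → F i) (m : ∀ i, F i → F i → F i → F i)
    (R : Set (∀ i, F i)) : Prop :=
  R.Nonempty ∧
  (∀ x ∈ R, ∀ y ∈ R, (fun i => dot i (x i) (y i)) ∈ R) ∧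
  (∀ x ∈ R, ∀ y ∈ R, ∀ z ∈ R, (fun i => m i (x i) (y i) (z i)) ∈ R) ∧
  (∀ (i : Fin n) (a : F i), ∃ x ∈ R, x i = a)

/-- Unary polynomials of a relation `R`: families of maps generated from the identity
family and constant families taken from `R`, closed under coordinatewise `dot` and `m`. -/
inductive RPol (dot : ∀ i, F i → F i → F i) (m : ∀ i, F i → F i → F i → F i)
    (R : Set (∀ i, F i)) : (∀ i, F i → F i) → Prop
  | id : RPol dot m R fun _ x => x
  | const (a : ∀ i, F i) (ha : a ∈ R) : RPol dot m R fun i _ => a i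
  | dotc {p q : ∀ i, F i → F i} : RPol dot m R p → RPol dot m R q →
      RPol dot m R fun i x => dot i (p i x) (q i x)
  | mc {p q r : ∀ i, F i → F i} : RPol dot m R p → RPol dot m R q → RPol dot m R r →
      RPol dot m R fun i x => m i (p i x) (q i x) (r i x)

/-- The interval `(α,β)` at coordinate `i` can be separated from `(γ,δ)` at
coordinate `j` in `R`. -/
def SepIn (dot : ∀ i, F i → F i → F i) (m : ∀ i, F i → F i → F i → F i)
    (R : Set (∀ i, F i)) (i : Fin n) (α β : F i → F i → Prop)
    (j : Fin n) (γ δ : F j → F j → Prop) : Prop :=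
  ∃ p, RPol dot m R p ∧ ¬ PolMaps (p i) β α ∧ PolMaps (p j) δ γ

/-- `(i, α, β) ∈ I_R` : `α ≺ β ≤ θ_{A_i}` is a prime interval of congruences of `F i`. -/
def InIR (dot : ∀ i, F i → F i → F i) (m : ∀ i, F i → F i → F i → F i)
    (σ : ∀ i, F i → F i → Prop) (i : Fin n) (α β : F i → F i → Prop) : Prop :=
  IsCong (dot i) (m i) α ∧ IsCong (dot i) (m i) β ∧
  PrimeCov (IsCong (dot i) (m i)) α β ∧ RelLE β (ThetaA (dot i) (σ i))

end Subdirect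

section CSP

variable {V : Type*} {D : V → Type*}

/-- A constraint: a scope `W ⊆ V` together with a relation on `∏_{v ∈ W} D v`. -/
abbrev Constr (V : Type*) (D : V → Type*) := Σ W : Set V, Set (∀ v : W, D v.1)

/-- Solutions of the restricted instance `P_W` (recorded as full assignments;
only the values on `W` are constrained). -/
def SolOn (C : Set (Constr V D)) (W : Set V) : Set (∀ v, D v) :=
  {φ | ∀ c ∈ C, ∃ x ∈ c.2, ∀ u : c.1, u.1 ∈ W → x u = φ u.1}

/-- The binary relation `S_{vw}` of partial solutions on `{v, w}`. -/
def SvwRel (C : Set (Constr V D)) (v w : V) (a : D v) (b : D w) : Prop :=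
  ∃ φ ∈ SolOn C {v, w}, φ v = a ∧ φ w = b

/-- The instance is tightened : `A_v = S_v` for every variable `v`. -/
def Tight (C : Set (Constr V D)) : Prop :=
  ∀ (v : V) (a : D v), ∃ φ ∈ SolOn C {v}, φ v = a

/-- The restricted instance `P_W` is minimal: every tuple of every constraint of `P_W`
extends to a solution of `P_W`. -/
def MinOn (C : Set (Constr V D)) (W : Set V) : Prop :=
  ∀ c ∈ C, ∀ x ∈ c.2, ∃ φ ∈ SolOn C W, ∀ u : c.1, u.1 ∈ W → φ u.1 = x u

/-- `k`-minimality: `P_W` is minimal for every `k`-element `W ⊆ V`. -/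
def KMin (C : Set (Constr V D)) (k : ℕ) : Prop :=
  ∀ W : Set V, W.ncard = k → MinOn C W

/-- `(v, α, β) ∈ I_P` : `α ≺ β ≤ θ_{A_v}` is a prime interval of congruences of `D v`. -/
def InIP (dot : ∀ v, D v → D v → D v) (m : ∀ v, D v → D v → D v → D v)
    (σ : ∀ v, D v → D v → Prop) (v : V) (α β : D v → D v → Prop) : Prop :=
  IsCong (dot v) (m v) α ∧ IsCong (dot v) (m v) β ∧
  PrimeCov (IsCong (dot v) (m v)) α β ∧ RelLE β (ThetaA (dot v) (σ v))

/-- `(α,β)` (at `v`) can be separated from `(γ,δ)` (at `w`) in `S_{vw}`. -/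
def SepPair (dot : ∀ v, D v → D v → D v) (m : ∀ v, D v → D v → D v → D v)
    (C : Set (Constr V D)) (v : V) (α β : D v → D v → Prop)
    (w : V) (γ δ : D w → D w → Prop) : Prop :=
  ∃ p q, BPol (dot v) (m v) (dot w) (m w) (SvwRel C v w) p q ∧
    ¬ PolMaps p β α ∧ PolMaps q δ γ

/-- The coherent set `W_{vαβ}`. -/
def WCoh (dot : ∀ v, D v → D v → D v) (m : ∀ v, D v → D v → D v → D v)
    (σ : ∀ v, D v → D v → Prop) (C : Set (Constr V D))
    (v : V) (α β : D v → D v → Prop) : Set V :=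
  {w | ∃ γ δ : D w → D w → Prop, InIP dot m σ w γ δ ∧
    ¬ SepPair dot m C v α β w γ δ}

/-- Block-minimality: `P_{W_{vαβ}}` is minimal for every `(v,α,β) ∈ I_P`. -/
def BlockMin (dot : ∀ v, D v → D v → D v) (m : ∀ v, D v → D v → D v → D v)
    (σ : ∀ v, D v → D v → Prop) (C : Set (Constr V D)) : Prop :=
  ∀ (v : V) (α β : D v → D v → Prop), InIP dot m σ v α β →
    MinOn C (WCoh dot m σ C v α β)

/-- A `ḡ`-ensemble for the instance `C`. -/
def IsEnsemble (dot : ∀ v, D v → D v → D v) (m : ∀ v, D v → D v → D v → D v)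
    (σ : ∀ v, D v → D v → Prop) (C : Set (Constr V D))
    (g : ∀ u, D u → D u → Prop)
    (Φ : ∀ (v : V) (α β : D v → D v → Prop), InIP dot m σ v α β → ∀ u, D u) : Prop :=
  (∀ (v : V) (α β : D v → D v → Prop) (h : InIP dot m σ v α β),
    Φ v α β h ∈ SolOn C (WCoh dot m σ C v α β)) ∧
  (∀ (v : V) (α β : D v → D v → Prop) (h : InIP dot m σ v α β)
      (w : V) (γ δ : D w → D w → Prop) (h' : InIP dot m σ w γ δ)
      (u : V), u ∈ WCoh dot m σ C v α β → u ∈ WCoh dot m σ C w γ δ →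
    g u (Φ v α β h u) (Φ w γ δ h' u)) ∧
  (∀ c ∈ C, ∃ x ∈ c.2, ∀ (u : c.1) (v : V) (α β : D v → D v → Prop)
      (h : InIP dot m σ v α β), u.1 ∈ WCoh dot m σ C v α β →
    g u.1 (x u) (Φ v α β h u.1))

end CSP

end SBMPaper


namespace SBMPaper

private lemma mpol_comp {A : Type*} {m : A → A → A → A} {g p : A → A}
    (hg : MPol m g) (hp : MPol m p) : MPol m (fun x => g (p x)) := by
  induction hg with
  | id => exact hp
  | const a => exact MPol.const a
  | mc h1 h2 h3 ih1 ih2 ih3 => exact MPol.mc ih1 ih2 ih3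

private lemma mpol_pres {A : Type*} {m : A → A → A → A} {γ : A → A → Prop}
    (hγ : IsMCong m γ) {g : A → A} (hg : MPol m g) :
    ∀ x y, γ x y → γ (g x) (g y) := by
  induction hg with
  | id => exact fun x y h => h
  | const a => exact fun x y _ => hγ.1.refl a
  | mc h1 h2 h3 ih1 ih2 ih3 =>
      exact fun x y h => hγ.2 _ _ _ _ _ _ (ih1 x y h) (ih2 x y h) (ih3 x y h)

end SBMPaper

namespace SBMPaper

/-- In a finite Mal'tsev algebra, for a prime interval `α ≺ β` of congruences and any
pair `(a,b) ∈ β ∖ α`, there is an `(α,β)`-minimal set intersecting both the `α`-block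
of `a` and the `α`-block of `b`. -/
theorem maltsev_minimal_set_meets_blocks {A : Type*} [Fintype A]
    (m : A → A → A → A) (hm : IsMaltsevOp m)
    (α β : A → A → Prop) (hα : IsMCong m α) (hβ : IsMCong m β)
    (hprime : PrimeCov (IsMCong m) α β)
    (a b : A) (hab : β a b) (hnab : ¬ α a b) :
    ∃ U : Set A, IsMinSetP (MPol m) α β U ∧
      (∃ u ∈ U, α a u) ∧ (∃ u ∈ U, α b u) := by
  classical
  -- the set of cardinalities of ranges of "good" polynomials
  set Pset : Set ℕ :=
    {n | ∃ p : A → A, MPol m p ∧ ¬ PolMaps p β α ∧ (Set.range p).ncard = n} with hPset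
  have hid_prop : ¬ PolMaps (fun x : A => x) β α := by
    intro h; exact hnab (h a b hab)
  have hne : Pset.Nonempty := ⟨_, (fun x : A => x), MPol.id, hid_prop, rfl⟩
  obtain ⟨p, hp, hpprop, hpN⟩ := Nat.sInf_mem hne
  set N := sInf Pset with hN
  have key : ∀ q : A → A, MPol m q → ¬ PolMaps q β α → N ≤ (Set.range q).ncard := by
    intro q h1 h2; exact Nat.sInf_le ⟨q, h1, h2, rfl⟩
  -- extract a non-collapsed pair
  have : ∃ c d : A, β c d ∧ ¬ α (p c) (p d) := by
    by_contra h; push_neg at h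
    exact hpprop (fun c d hcd => h c d hcd)
  obtain ⟨c, d, hcd, hncd⟩ := this
  set u := p c with hu
  set w := p d with hw
  have hβuw : β u w := mpol_pres hβ hp c d hcd
  -- the congruence Γ generated by α and (u,w)
  set Γ : A → A → Prop :=
    fun x y => ∃ g : A → A, MPol m g ∧ α x (g u) ∧ α y (g w) with hΓ
  have hΓrefl : ∀ x : A, Γ x x :=
    fun x => ⟨fun _ => x, MPol.const x, hα.1.refl x, hα.1.refl x⟩
  have hΓsymm : ∀ x y : A, Γ x y → Γ y x := by
    rintro x y ⟨g, hg, hxg, hyg⟩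
    refine ⟨fun t => m (g u) (g t) (g w), MPol.mc (MPol.const _) hg (MPol.const _), ?_, ?_⟩
    · show α y (m (g u) (g u) (g w))
      rw [(hm (g w) (g u)).2]; exact hyg
    · show α x (m (g u) (g w) (g w))
      rw [(hm (g u) (g w)).1]; exact hxg
  have hΓtrans : ∀ x y z : A, Γ x y → Γ y z → Γ x z := by
    rintro x y z ⟨g, hg, hxg, hyg⟩ ⟨h, hh, hyh, hzh⟩
    refine ⟨fun t => m (g t) (g w) (h t), MPol.mc hg (MPol.const _) hh, ?_, ?_⟩
    · show α x (m (g u) (g w) (h u))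
      have h1 : α (g w) (h u) := hα.1.trans (hα.1.symm hyg) hyh
      have h2 : α (m (g u) (g w) (h u)) (m (g u) (h u) (h u)) :=
        hα.2 _ _ _ _ _ _ (hα.1.refl _) h1 (hα.1.refl _)
      have h3 : m (g u) (h u) (h u) = g u := (hm (g u) (h u)).1
      rw [h3] at h2
      exact hα.1.trans hxg (hα.1.symm h2)
    · show α z (m (g w) (g w) (h w))
      rw [(hm (h w) (g w)).2]; exact hzh
  have hΓcomp : ∀ x1 x2 y1 y2 z1 z2 : A, Γ x1 x2 → Γ y1 y2 → Γ z1 z2 →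
      Γ (m x1 y1 z1) (m x2 y2 z2) := by
    rintro x1 x2 y1 y2 z1 z2 ⟨g1, hg1, hx1, hx2⟩ ⟨g2, hg2, hy1, hy2⟩ ⟨g3, hg3, hz1, hz2⟩
    exact ⟨fun t => m (g1 t) (g2 t) (g3 t), MPol.mc hg1 hg2 hg3,
      hα.2 _ _ _ _ _ _ hx1 hy1 hz1, hα.2 _ _ _ _ _ _ hx2 hy2 hz2⟩
  have hΓcong : IsMCong m Γ := ⟨⟨hΓrefl, fun {x y} h => hΓsymm x y h,
    fun {x y z} h1 h2 => hΓtrans x y z h1 h2⟩, hΓcomp⟩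
  have hαΓ : RelLE α Γ := by
    intro x y hxy
    exact ⟨fun _ => y, MPol.const y, hxy, hα.1.refl y⟩
  have hΓβ : RelLE Γ β := by
    rintro x y ⟨g, hg, hxg, hyg⟩
    have h1 : β (g u) (g w) := mpol_pres hβ hg u w hβuw
    exact hβ.1.trans (hprime.1 _ _ hxg) (hβ.1.trans h1 (hβ.1.symm (hprime.1 _ _ hyg)))
  have hΓuw : Γ u w := ⟨fun t => t, MPol.id, hα.1.refl u, hα.1.refl w⟩
  have hΓβeq : Γ = β := by
    rcases hprime.2.2 Γ hΓcong hαΓ hΓβ with h | h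
    · exact absurd (h ▸ hΓuw) hncd
    · exact h
  have hΓab : Γ a b := by rw [hΓβeq]; exact hab
  obtain ⟨g, hg, hag, hbg⟩ := hΓab
  -- the final polynomial and minimal set
  set q : A → A := fun x => g (p x) with hq
  have hqpol : MPol m q := mpol_comp hg hp
  have hqc : q c = g u := rfl
  have hqd : q d = g w := rfl
  have hnqcd : ¬ α (q c) (q d) := by
    rw [hqc, hqd]
    intro hguw
    exact hnab (hα.1.trans hag (hα.1.trans hguw (hα.1.symm hbg)))
  have hqprop : ¬ PolMaps q β α := fun h => hnqcd (h c d hcd)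
  have hqcard : (Set.range q).ncard ≤ N := by
    have h1 : Set.range q = g '' Set.range p := by
      rw [hq, ← Set.range_comp]; rfl
    rw [h1, ← hpN]
    exact Set.ncard_image_le (Set.toFinite _)
  refine ⟨Set.range q, ⟨⟨q, hqpol, rfl, hqprop⟩, ?_⟩, ⟨q c, Set.mem_range_self c, hqc ▸ hag⟩,
    ⟨q d, Set.mem_range_self d, hqd ▸ hbg⟩⟩
  rintro U' ⟨p', hp', hrange', hprop'⟩ hsub
  have h1 : N ≤ U'.ncard := hrange' ▸ key p' hp' hprop'
  exact Set.eq_of_subset_of_ncard_le hsub (le_trans hqcard h1) (Set.toFinite _)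


end SBMPaper
end

section
/- Let A be a finite nonempty set with an idempotent binary operation · and an idempotent ternary operation m, and let σ be an equivalence relation on A preserved by · and m such that: the operation induced by · on A/σ is a semilattice operation; a·b = a whenever a ≡_σ b; m(a,b,b) = m(b,b,a) = a whenever a ≡_σ b; and the operation induced by m on A/σ is a semilattice term operation of (A/σ, ·), i.e., there is a nonempty subset S ⊆ {1,2,3} such that m(a_1,a_2,a_3) ≡_σ the ·-product of {a_i : i ∈ S} for all a_1,a_2,a_3 ∈ A. Define m'(x,y,z) = ((m(x,y,z)·x)·y)·z. Then m'(a,b,b) = m'(b,b,a) = a whenever a ≡_σ b, and m'(a,b,c) ≡_σ (a·b)·c for all a,b,c ∈ A. -/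
private lemma sl111 {α} [SemilatticeInf α] (x y z : α) : (x⊓y⊓z)⊓x⊓y⊓z = x⊓y⊓z := by
  simp [inf_assoc, inf_comm, inf_left_comm, inf_idem, inf_left_idem, inf_right_idem]
private lemma sl110 {α} [SemilatticeInf α] (x y z : α) : (x⊓y)⊓x⊓y⊓z = x⊓y⊓z := by
  simp [inf_assoc, inf_comm, inf_left_comm, inf_idem, inf_left_idem, inf_right_idem]
private lemma sl101 {α} [SemilatticeInf α] (x y z : α) : (x⊓z)⊓x⊓y⊓z = x⊓y⊓z := by
  simp [inf_assoc, inf_comm, inf_left_comm, inf_idem, inf_left_idem, inf_right_idem]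
private lemma sl011 {α} [SemilatticeInf α] (x y z : α) : (y⊓z)⊓x⊓y⊓z = x⊓y⊓z := by
  simp [inf_assoc, inf_comm, inf_left_comm, inf_idem, inf_left_idem, inf_right_idem]
private lemma sl100 {α} [SemilatticeInf α] (x y z : α) : x⊓x⊓y⊓z = x⊓y⊓z := by
  simp [inf_assoc, inf_comm, inf_left_comm, inf_idem, inf_left_idem, inf_right_idem]
private lemma sl010 {α} [SemilatticeInf α] (x y z : α) : y⊓x⊓y⊓z = x⊓y⊓z := by
  simp [inf_assoc, inf_comm, inf_left_comm, inf_idem, inf_left_idem, inf_right_idem]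
private lemma sl001 {α} [SemilatticeInf α] (x y z : α) : z⊓x⊓y⊓z = x⊓y⊓z := by
  simp [inf_assoc, inf_comm, inf_left_comm, inf_idem, inf_left_idem, inf_right_idem]

/-- The `dot`-product of the nonempty subset of `{a₁,a₂,a₃}` selected by the Booleans
`b₁ b₂ b₃` (the products being computed from left to right). -/
def selProd {A : Type*} (dot : A → A → A) :
    Bool → Bool → Bool → A → A → A → A
  | true, true, true, a₁, a₂, a₃ => dot (dot a₁ a₂) a₃
  | true, true, false, a₁, a₂, _ => dot a₁ a₂
  | true, false, true, a₁, _, a₃ => dot a₁ a₃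
  | false, true, true, _, a₂, a₃ => dot a₂ a₃
  | true, false, false, a₁, _, _ => a₁
  | false, true, false, _, a₂, _ => a₂
  | false, false, true, _, _, a₃ => a₃
  | false, false, false, a₁, _, _ => a₁

private lemma selProd_sigma {A : Type*} (dot : A → A → A) (σ : A → A → Prop)
    (hσ : Equivalence σ)
    (hdotc : ∀ a a' b b' : A, σ a a' → σ b b' → σ (dot a b) (dot a' b'))
    (hidd : ∀ a : A, dot a a = a)
    (hcomm : ∀ a b : A, σ (dot a b) (dot b a))
    (hassoc : ∀ a b c : A, σ (dot (dot a b) c) (dot a (dot b c)))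
    (b₁ b₂ b₃ : Bool) (hb : (b₁ || b₂ || b₃) = true) (a b c : A) :
    σ (dot (dot (dot (selProd dot b₁ b₂ b₃ a b c) a) b) c) (dot (dot a b) c) := by
  letI s : Setoid A := ⟨σ, hσ⟩
  have key : ∀ x y : A, Quotient.mk s x = Quotient.mk s y → σ x y :=
    fun x y h => Quotient.exact h
  letI : Min (Quotient s) := ⟨Quotient.map₂ dot (fun a a' h b b' h' => hdotc a a' b b' h h')⟩
  letI : SemilatticeInf (Quotient s) := SemilatticeInf.mk'
    (fun x y => by
      induction x using Quotient.ind; induction y using Quotient.ind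
      exact Quotient.sound (hcomm _ _))
    (fun x y z => by
      induction x using Quotient.ind; induction y using Quotient.ind
      induction z using Quotient.ind
      exact Quotient.sound (hassoc _ _ _))
    (fun x => by
      induction x using Quotient.ind
      exact congrArg _ (hidd _))
  have hmk : ∀ x y : A, (Quotient.mk s (dot x y)) = (Quotient.mk s x) ⊓ (Quotient.mk s y) :=
    fun x y => rfl
  apply key
  cases b₁ <;> cases b₂ <;> cases b₃ <;> simp only [selProd, hmk] <;>
    first
      | exact sl111 (Quotient.mk s a) (Quotient.mk s b) (Quotient.mk s c)
      | exact sl110 (Quotient.mk s a) (Quotient.mk s b) (Quotient.mk s c)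
      | exact sl101 (Quotient.mk s a) (Quotient.mk s b) (Quotient.mk s c)
      | exact sl011 (Quotient.mk s a) (Quotient.mk s b) (Quotient.mk s c)
      | exact sl100 (Quotient.mk s a) (Quotient.mk s b) (Quotient.mk s c)
      | exact sl010 (Quotient.mk s a) (Quotient.mk s b) (Quotient.mk s c)
      | exact sl001 (Quotient.mk s a) (Quotient.mk s b) (Quotient.mk s c)
      | simp at hb

/-- Adjusting the Mal'tsev operation: if `m` is Mal'tsev on `σ`-blocks and acts on the
semilattice `A/σ` as a semilattice term, then `m'(x,y,z) = ((m(x,y,z)·x)·y)·z` is still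
Mal'tsev on `σ`-blocks and satisfies `m'(a,b,c) ≡_σ (a·b)·c`. -/
theorem adjusted_maltsev_operation {A : Type*} [Fintype A] [Nonempty A]
    (dot : A → A → A) (m : A → A → A → A) (σ : A → A → Prop)
    (hσ : Equivalence σ)
    (hdotc : ∀ a a' b b' : A, σ a a' → σ b b' → σ (dot a b) (dot a' b'))
    (hmc : ∀ a a' b b' c c' : A, σ a a' → σ b b' → σ c c' →
      σ (m a b c) (m a' b' c'))
    (hidd : ∀ a : A, dot a a = a) (hidm : ∀ a : A, m a a a = a)
    (hcomm : ∀ a b : A, σ (dot a b) (dot b a))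
    (hassoc : ∀ a b c : A, σ (dot (dot a b) c) (dot a (dot b c)))
    (hproj : ∀ a b : A, σ a b → dot a b = a)
    (hmal : ∀ a b : A, σ a b → m a b b = a ∧ m b b a = a)
    (hterm : ∃ b₁ b₂ b₃ : Bool, (b₁ || b₂ || b₃) = true ∧
      ∀ a₁ a₂ a₃ : A, σ (m a₁ a₂ a₃) (selProd dot b₁ b₂ b₃ a₁ a₂ a₃)) :
    let m' : A → A → A → A := fun x y z => dot (dot (dot (m x y z) x) y) z
    (∀ a b : A, σ a b → m' a b b = a ∧ m' b b a = a) ∧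
    (∀ a b c : A, σ (m' a b c) (dot (dot a b) c)) := by
  intro m'
  constructor
  · intro a b hab
    have hba := hσ.symm hab
    constructor
    · show dot (dot (dot (m a b b) a) b) b = a
      rw [(hmal a b hab).1, hidd, hproj a b hab, hproj a b hab]
    · show dot (dot (dot (m b b a) b) b) a = a
      rw [(hmal a b hab).2, hproj a b hab, hproj a b hab, hidd]
  · intro a b c
    obtain ⟨b₁, b₂, b₃, hb, hm⟩ := hterm
    have h1 : σ (m' a b c) (dot (dot (dot (selProd dot b₁ b₂ b₃ a b c) a) b) c) :=
      hdotc _ _ _ _ (hdotc _ _ _ _ (hdotc _ _ _ _ (hm a b c) (hσ.refl a)) (hσ.refl b))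
        (hσ.refl c)
    exact hσ.trans h1 (selProd_sigma dot σ hσ hdotc hidd hcomm hassoc b₁ b₂ b₃ hb a b c)
end

section
/- Let A be a semilattice block Mal'tsev (SBM) algebra. Then the equivalence relation θ_A on A whose blocks are max(A) and the singletons {a} for a ∉ max(A) is a congruence of A, i.e., it is preserved by · and by m. -/
namespace SBMPaper

/-- In an SBM algebra the equivalence relation `θ_A`, whose blocks are `max(A)` and the
singletons outside `max(A)`, is a congruence: it is preserved by `·` and by `m`. -/
theorem theta_is_congruence {A : Type*} [Fintype A] [Nonempty A]
    (dot : A → A → A) (m : A → A → A → A) (σ : A → A → Prop)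
    (hsbm : IsSBM dot m σ) :
    IsCong dot m (ThetaA dot σ) := by
  obtain ⟨⟨hequiv, hdotc, hmc⟩, hcomm, hassoc, hproj, hmal, hmdot, habs⟩ := hsbm
  -- InMax respects σ
  have hmaxσ : ∀ x y : A, σ x y → InMax dot σ x → InMax dot σ y := by
    intro x y hxy hx b
    exact hequiv.trans (hequiv.trans (hdotc b b y x (hequiv.refl b) (hequiv.symm hxy)) (hx b)) hxy
  -- a ∈ max → dot a b ∈ max
  have hmaxl : ∀ a b : A, InMax dot σ a → InMax dot σ (dot a b) := by
    intro a b ha c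
    have h1 : σ (dot c (dot a b)) (dot (dot c a) b) := hequiv.symm (hassoc c a b)
    have h2 : σ (dot (dot c a) b) (dot a b) := hdotc _ _ _ _ (ha c) (hequiv.refl b)
    exact hequiv.trans h1 h2
  have hmaxr : ∀ a b : A, InMax dot σ b → InMax dot σ (dot a b) := by
    intro a b hb
    exact hmaxσ _ _ (hequiv.symm (hcomm a b)) (hmaxl b a hb)
  refine ⟨⟨fun a => Or.inl rfl, ?_, ?_⟩, ?_, ?_⟩
  · rintro a b (rfl | ⟨h1, h2⟩)
    · exact Or.inl rfl
    · exact Or.inr ⟨h2, h1⟩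
  · rintro a b c (rfl | ⟨h1, h2⟩) hbc
    · exact hbc
    · rcases hbc with rfl | ⟨h3, h4⟩
      · exact Or.inr ⟨h1, h2⟩
      · exact Or.inr ⟨h1, h4⟩
  · rintro a a' b b' (rfl | ⟨h1, h2⟩) (rfl | ⟨h3, h4⟩)
    · exact Or.inl rfl
    · exact Or.inr ⟨hmaxr a b h3, hmaxr a b' h4⟩
    · exact Or.inr ⟨hmaxl a b h1, hmaxl a' b h2⟩
    · exact Or.inr ⟨hmaxl a b h1, hmaxl a' b' h2⟩
  · intro a a' b b' c c' ha hb hc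
    rcases ha with rfl | ⟨ha1, ha2⟩
    · rcases hb with rfl | ⟨hb1, hb2⟩
      · rcases hc with rfl | ⟨hc1, hc2⟩
        · exact Or.inl rfl
        · exact Or.inr ⟨hmaxσ _ _ (hequiv.symm (hmdot a b c)) (hmaxr _ _ hc1),
            hmaxσ _ _ (hequiv.symm (hmdot a b c')) (hmaxr _ _ hc2)⟩
      · exact Or.inr ⟨hmaxσ _ _ (hequiv.symm (hmdot a b c)) (hmaxl _ _ (hmaxr _ _ hb1)),
          hmaxσ _ _ (hequiv.symm (hmdot a b' c')) (hmaxl _ _ (hmaxr _ _ hb2))⟩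
    · exact Or.inr ⟨hmaxσ _ _ (hequiv.symm (hmdot a b c)) (hmaxl _ _ (hmaxl _ _ ha1)),
        hmaxσ _ _ (hequiv.symm (hmdot a' b' c')) (hmaxl _ _ (hmaxl _ _ ha2))⟩

end SBMPaper
end

section
/- Let R be a subdirect product of SBM algebras A_1, …, A_n, and let max(R) = R ∩ (max(A_1)×…×max(A_n)). Then the equivalence relation θ_R on R whose blocks are max(R) and the singletons {a} for a ∈ R ∖ max(R) is a congruence of R, i.e., it is preserved by the coordinatewise application of · and m. -/
namespace SBMPaper


section Aux
variable {A : Type*} {dot : A → A → A} {m : A → A → A → A} {σ : A → A → Prop}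

lemma inMax_sigma (h : IsSBM dot m σ) {a a' : A} (hs : σ a a')
    (ha : InMax dot σ a) : InMax dot σ a' := by
  intro b
  have e : σ (dot b a) (dot b a') := h.1.2.1 b b a a' (h.1.1.refl b) hs
  exact h.1.1.trans (h.1.1.trans (h.1.1.symm e) (ha b)) hs

lemma inMax_dotr (h : IsSBM dot m σ) {a : A} (ha : InMax dot σ a) (b : A) :
    InMax dot σ (dot b a) :=
  inMax_sigma h (h.1.1.symm (ha b)) ha

lemma inMax_dotl (h : IsSBM dot m σ) {a : A} (ha : InMax dot σ a) (b : A) :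
    InMax dot σ (dot a b) :=
  inMax_sigma h (h.2.1 b a) (inMax_dotr h ha b)

lemma inMax_dot_or (h : IsSBM dot m σ) {a b : A}
    (hab : InMax dot σ a ∨ InMax dot σ b) : InMax dot σ (dot a b) := by
  rcases hab with ha | hb
  · exact inMax_dotl h ha b
  · exact inMax_dotr h hb a

lemma inMax_m (h : IsSBM dot m σ) {a b c : A}
    (hmax : InMax dot σ a ∨ InMax dot σ b ∨ InMax dot σ c) :
    InMax dot σ (m a b c) := by
  have hm : σ (m a b c) (dot (dot a b) c) := h.2.2.2.2.2.1 a b c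
  apply inMax_sigma h (h.1.1.symm hm)
  rcases hmax with ha | hb | hc
  · exact inMax_dotl h (inMax_dotl h ha b) c
  · exact inMax_dotl h (inMax_dotr h hb a) c
  · exact inMax_dotr h hc (dot a b)

end Aux

/-- For a subdirect product `R` of SBM algebras, the equivalence relation `θ_R` whose
blocks are `max(R) = R ∩ (max(A₁)×…×max(Aₙ))` and singletons is a congruence of `R`. -/
theorem thetaR_is_congruence {n : ℕ} {F : Fin n → Type*}
    [∀ i, Fintype (F i)] [∀ i, Nonempty (F i)]
    (dot : ∀ i, F i → F i → F i) (m : ∀ i, F i → F i → F i → F i)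
    (σ : ∀ i, F i → F i → Prop)
    (hsbm : ∀ i, IsSBM (dot i) (m i) (σ i))
    (R : Set (∀ i, F i)) (hR : SubdirectProd dot m R) :
    let maxR : Set (∀ i, F i) := {x | x ∈ R ∧ ∀ i, InMax (dot i) (σ i) (x i)}
    let θR : (∀ i, F i) → (∀ i, F i) → Prop :=
      fun x y => x = y ∨ (x ∈ maxR ∧ y ∈ maxR)
    Equivalence θR ∧
    (∀ x ∈ R, ∀ x' ∈ R, ∀ y ∈ R, ∀ y' ∈ R, θR x x' → θR y y' →
      θR (fun i => dot i (x i) (y i)) (fun i => dot i (x' i) (y' i))) ∧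
    (∀ x ∈ R, ∀ x' ∈ R, ∀ y ∈ R, ∀ y' ∈ R, ∀ z ∈ R, ∀ z' ∈ R,
      θR x x' → θR y y' → θR z z' →
      θR (fun i => m i (x i) (y i) (z i)) (fun i => m i (x' i) (y' i) (z' i))) := by
  intro maxR θR
  have hdotR := hR.2.1
  have hmR := hR.2.2.1
  -- membership lemmas
  have hdotMax : ∀ x ∈ R, ∀ y ∈ R,
      ((∀ i, InMax (dot i) (σ i) (x i)) ∨ (∀ i, InMax (dot i) (σ i) (y i))) →
      (fun i => dot i (x i) (y i)) ∈ maxR := by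
    intro x hx y hy hor
    refine ⟨hdotR x hx y hy, fun i => ?_⟩
    rcases hor with hx' | hy'
    · exact inMax_dot_or (hsbm i) (Or.inl (hx' i))
    · exact inMax_dot_or (hsbm i) (Or.inr (hy' i))
  have hmMax : ∀ x ∈ R, ∀ y ∈ R, ∀ z ∈ R,
      ((∀ i, InMax (dot i) (σ i) (x i)) ∨ (∀ i, InMax (dot i) (σ i) (y i)) ∨
        (∀ i, InMax (dot i) (σ i) (z i))) →
      (fun i => m i (x i) (y i) (z i)) ∈ maxR := by
    intro x hx y hy z hz hor
    refine ⟨hmR x hx y hy z hz, fun i => ?_⟩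
    rcases hor with h1 | h2 | h3
    · exact inMax_m (hsbm i) (Or.inl (h1 i))
    · exact inMax_m (hsbm i) (Or.inr (Or.inl (h2 i)))
    · exact inMax_m (hsbm i) (Or.inr (Or.inr (h3 i)))
  refine ⟨⟨fun x => Or.inl rfl, ?_, ?_⟩, ?_, ?_⟩
  · rintro x y (rfl | ⟨h1, h2⟩)
    · exact Or.inl rfl
    · exact Or.inr ⟨h2, h1⟩
  · rintro x y z (rfl | ⟨h1, h2⟩) (rfl | ⟨h3, h4⟩)
    · exact Or.inl rfl
    · exact Or.inr ⟨h3, h4⟩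
    · exact Or.inr ⟨h1, h2⟩
    · exact Or.inr ⟨h1, h4⟩
  · rintro x hx x' hx' y hy y' hy' (rfl | ⟨hx1, hx2⟩) (rfl | ⟨hy1, hy2⟩)
    · exact Or.inl rfl
    · exact Or.inr ⟨hdotMax x hx y hy (Or.inr hy1.2), hdotMax x hx' y' hy' (Or.inr hy2.2)⟩
    · exact Or.inr ⟨hdotMax x hx y hy (Or.inl hx1.2), hdotMax x' hx' y hy' (Or.inl hx2.2)⟩
    · exact Or.inr ⟨hdotMax x hx y hy (Or.inl hx1.2), hdotMax x' hx' y' hy' (Or.inl hx2.2)⟩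
  · rintro x hx x' hx' y hy y' hy' z hz z' hz'
      (rfl | ⟨hx1, hx2⟩) (rfl | ⟨hy1, hy2⟩) (rfl | ⟨hz1, hz2⟩)
    · exact Or.inl rfl
    · exact Or.inr ⟨hmMax x hx y hy z hz (Or.inr (Or.inr hz1.2)),
        hmMax x hx' y hy' z' hz' (Or.inr (Or.inr hz2.2))⟩
    · exact Or.inr ⟨hmMax x hx y hy z hz (Or.inr (Or.inl hy1.2)),
        hmMax x hx' y' hy' z hz' (Or.inr (Or.inl hy2.2))⟩
    · exact Or.inr ⟨hmMax x hx y hy z hz (Or.inr (Or.inl hy1.2)),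
        hmMax x hx' y' hy' z' hz' (Or.inr (Or.inl hy2.2))⟩
    · exact Or.inr ⟨hmMax x hx y hy z hz (Or.inl hx1.2),
        hmMax x' hx' y hy' z hz' (Or.inl hx2.2)⟩
    · exact Or.inr ⟨hmMax x hx y hy z hz (Or.inl hx1.2),
        hmMax x' hx' y hy' z' hz' (Or.inl hx2.2)⟩
    · exact Or.inr ⟨hmMax x hx y hy z hz (Or.inl hx1.2),
        hmMax x' hx' y' hy' z hz' (Or.inl hx2.2)⟩
    · exact Or.inr ⟨hmMax x hx y hy z hz (Or.inl hx1.2),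
        hmMax x' hx' y' hy' z' hz' (Or.inl hx2.2)⟩


end SBMPaper
end

section
/- Let A be an SBM algebra and let α ≺ β ≤ θ_A be congruences of A. Then every (α,β)-minimal set is a subset of max(A). -/
namespace SBMPaper

/-- Unary polynomials preserve congruences. -/
lemma upol_preserves {A : Type*} {dot : A → A → A} {m : A → A → A → A}
    {γ : A → A → Prop} (hγ : IsCong dot m γ) {p : A → A} (hp : UPol dot m p) :
    ∀ x y, γ x y → γ (p x) (p y) := by
  induction hp with
  | id => exact fun x y h => h
  | const a => exact fun x y _ => hγ.1.refl a
  | dotc hq hr ihq ihr => exact fun x y h => hγ.2.1 _ _ _ _ (ihq x y h) (ihr x y h)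
  | mc h1 h2 h3 i1 i2 i3 =>
      exact fun x y h => hγ.2.2 _ _ _ _ _ _ (i1 x y h) (i2 x y h) (i3 x y h)

/-- Unary polynomials are closed under composition. -/
lemma upol_comp {A : Type*} {dot : A → A → A} {m : A → A → A → A}
    {p q : A → A} (hp : UPol dot m p) (hq : UPol dot m q) :
    UPol dot m (fun x => p (q x)) := by
  induction hp with
  | id => exact hq
  | const a => exact UPol.const a
  | dotc _ _ ih1 ih2 => exact UPol.dotc ih1 ih2
  | mc _ _ _ i1 i2 i3 => exact UPol.mc i1 i2 i3

/-- Two elements of the maximal block are `σ`-related. -/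
lemma inmax_sigma {A : Type*} {dot : A → A → A} {σ : A → A → Prop}
    (hσ : Equivalence σ) (hcomm : ∀ a b : A, σ (dot a b) (dot b a))
    {x y : A} (hx : InMax dot σ x) (hy : InMax dot σ y) : σ x y := by
  have h1 : σ (dot x y) y := hy x
  have h2 : σ (dot y x) x := hx y
  exact hσ.symm (hσ.trans (hσ.trans (hσ.symm h1) (hcomm x y)) h2)

/-- `InMax` is invariant under `σ`. -/
lemma inmax_of_sigma {A : Type*} {dot : A → A → A} {m : A → A → A → A}
    {σ : A → A → Prop} (hσcong : IsCong dot m σ)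
    {u v : A} (huv : σ u v) (hv : InMax dot σ v) : InMax dot σ u := by
  intro b
  have h1 : σ (dot b u) (dot b v) := hσcong.2.1 b b u v (hσcong.1.refl b) huv
  exact hσcong.1.trans (hσcong.1.trans h1 (hv b)) (hσcong.1.symm huv)

/-- In an SBM algebra, every `(α,β)`-minimal set for `α ≺ β ≤ θ_A` is contained
in `max(A)`. -/
theorem minimal_set_subset_max {A : Type*} [Fintype A] [Nonempty A]
    (dot : A → A → A) (m : A → A → A → A) (σ : A → A → Prop)
    (hsbm : IsSBM dot m σ)
    (α β : A → A → Prop) (hα : IsCong dot m α) (hβ : IsCong dot m β)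
    (hprime : PrimeCov (IsCong dot m) α β)
    (hle : RelLE β (ThetaA dot σ))
    (U : Set A) (hU : IsMinSetP (UPol dot m) α β U) :
    ∀ a ∈ U, InMax dot σ a := by
  obtain ⟨⟨p, hp, hrange, hnp⟩, hmin⟩ := hU
  obtain ⟨hσcong, hcomm, hassoc, hproj, hmal, hmσ, hxxy⟩ := hsbm
  rw [PolMaps] at hnp; push_neg at hnp
  obtain ⟨a, b, hab, hnal⟩ := hnp
  have hpab : β (p a) (p b) := upol_preserves hβ hp a b hab
  have hne : p a ≠ p b := fun h => hnal (h ▸ hα.1.refl (p a))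
  have hmaxp : InMax dot σ (p a) ∧ InMax dot σ (p b) := by
    rcases hle _ _ hpab with h | h
    · exact absurd h hne
    · exact h
  have habne : a ≠ b := fun h => hne (congrArg p h)
  have hmaxab : InMax dot σ a ∧ InMax dot σ b := by
    rcases hle _ _ hab with h | h
    · exact absurd h habne
    · exact h
  have hσba : σ b a := inmax_sigma hσcong.1 hcomm hmaxab.2 hmaxab.1
  have hp' : UPol dot m (fun x => p (dot x a)) :=
    upol_comp hp (UPol.dotc UPol.id (UPol.const a))
  have hp'a : p (dot a a) = p a := by rw [hproj a a (hσcong.1.refl a)]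
  have hp'b : p (dot b a) = p b := by rw [hproj b a hσba]
  have hsub : Set.range (fun x => p (dot x a)) ⊆ U := by
    rintro _ ⟨x, rfl⟩
    rw [← hrange]
    exact ⟨dot x a, rfl⟩
  have hnp' : ¬ PolMaps (fun x => p (dot x a)) β α := by
    intro h
    have := h a b hab
    simp only [hp'a, hp'b] at this
    exact hnal this
  have hUeq : Set.range (fun x => p (dot x a)) = U :=
    hmin _ ⟨_, hp', rfl, hnp'⟩ hsub
  intro u hu
  rw [← hUeq] at hu
  obtain ⟨x, rfl⟩ := hu
  have h1 : σ (dot x a) a := hmaxab.1 x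
  have h2 : σ (p (dot x a)) (p a) := upol_preserves hσcong hp _ _ h1
  exact inmax_of_sigma hσcong h2 hmaxp.1

end SBMPaper
end

section
/- Let A be an SBM algebra with congruence σ, and let h be an idempotent unary polynomial of A (h∘h = h). Put A_1 = h(A), g_1(x,y) = h(x·y), m_1(x,y,z) = h(m(x,y,z)) (for x,y,z ∈ A_1), and σ_1 = σ ∩ (A_1×A_1). Then: σ_1 is an equivalence relation on A_1 preserved by g_1 and m_1; the operation induced by g_1 on A_1/σ_1 is a semilattice operation; g_1(a,b) = a whenever a,b ∈ A_1 with a ≡_{σ_1} b; m_1(a,b,b) = m_1(b,b,a) = a whenever a,b ∈ A_1 with a ≡_{σ_1} b; and m_1(a,b,c) ≡_{σ_1} g_1(g_1(a,b),c) for all a,b,c ∈ A_1. In particular, the retract (A_1; g_1, m_1, σ_1) is again an SBM algebra. -/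
namespace SBMPaper


section Retract

variable {A : Type*} {dot : A → A → A} {m : A → A → A → A} {σ : A → A → Prop}

/-- Unary polynomials preserve the congruence `σ`. -/
theorem upol_pres (hsbm : IsSBM dot m σ) {p : A → A} (hp : UPol dot m p) :
    ∀ x y, σ x y → σ (p x) (p y) := by
  induction hp with
  | id => exact fun x y hxy => hxy
  | const a => exact fun x y _ => hsbm.1.1.refl a
  | dotc _ _ ihp ihq => exact fun x y hxy => hsbm.1.2.1 _ _ _ _ (ihp x y hxy) (ihq x y hxy)
  | mc _ _ _ ihp ihq ihr =>
      exact fun x y hxy =>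
        hsbm.1.2.2 _ _ _ _ _ _ (ihp x y hxy) (ihq x y hxy) (ihr x y hxy)

/-- The setoid on `A` given by the congruence `σ`. -/
def sqSetoid (hsbm : IsSBM dot m σ) : Setoid A := ⟨σ, hsbm.1.1⟩

/-- The quotient `A/σ` is a commutative semigroup under (the map induced by) `dot`. -/
def qcs (hsbm : IsSBM dot m σ) : CommSemigroup (Quotient (sqSetoid hsbm)) where
  mul := Quotient.map₂ dot fun _ _ h1 _ _ h2 => hsbm.1.2.1 _ _ _ _ h1 h2
  mul_assoc a b c := by
    induction a using Quotient.inductionOn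
    induction b using Quotient.inductionOn
    induction c using Quotient.inductionOn
    exact Quotient.sound (hsbm.2.2.1 _ _ _)
  mul_comm a b := by
    induction a using Quotient.inductionOn
    induction b using Quotient.inductionOn
    exact Quotient.sound (hsbm.2.1 _ _)

/-- The shape of a unary polynomial on the quotient semilattice:
the identity, translation by a constant, or a constant. -/
def Shape (dot : A → A → A) (σ : A → A → Prop) (p : A → A) : Prop :=
  (∀ x, σ (p x) x) ∨ (∃ c, ∀ x, σ (p x) (dot x c)) ∨ (∃ c, ∀ x, σ (p x) c)

theorem shape_dot (hsbm : IsSBM dot m σ) {p q : A → A}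
    (hp : Shape dot σ p) (hq : Shape dot σ q) :
    Shape dot σ (fun x => dot (p x) (q x)) := by
  letI := qcs hsbm
  have key : ∀ a b : A, σ a b ↔ (⟦a⟧ : Quotient (sqSetoid hsbm)) = ⟦b⟧ := by
    intro a b
    exact ⟨fun hh => Quotient.sound hh, fun hh => Quotient.exact hh⟩
  have mk_mul : ∀ a b : A, (⟦a⟧ : Quotient (sqSetoid hsbm)) * ⟦b⟧ = ⟦dot a b⟧ :=
    fun a b => rfl
  have idem : ∀ a : A, (⟦a⟧ : Quotient (sqSetoid hsbm)) * ⟦a⟧ = ⟦a⟧ := by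
    intro a
    rw [mk_mul, hsbm.2.2.2.1 a a (hsbm.1.1.refl a)]
  rcases hp with hp | ⟨c, hp⟩ | ⟨c, hp⟩ <;> rcases hq with hq | ⟨d, hq⟩ | ⟨d, hq⟩ <;>
    [ (left; intro x);
      (right; left; refine ⟨d, fun x => ?_⟩);
      (right; left; refine ⟨d, fun x => ?_⟩);
      (right; left; refine ⟨c, fun x => ?_⟩);
      (right; left; refine ⟨dot c d, fun x => ?_⟩);
      (right; left; refine ⟨dot c d, fun x => ?_⟩);
      (right; left; refine ⟨c, fun x => ?_⟩);
      (right; left; refine ⟨dot c d, fun x => ?_⟩);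
      (right; right; refine ⟨dot c d, fun x => ?_⟩)] <;>
    (have hp' := (key _ _).mp (hp x)) <;> (have hq' := (key _ _).mp (hq x)) <;> rw [key]
  · rw [← mk_mul, hp', hq', idem]
  · rw [← mk_mul, hp', hq', ← mk_mul x d, ← mul_assoc, idem]
  · rw [← mk_mul, hp', hq', ← mk_mul x d]
  · rw [← mk_mul, hp', hq', ← mk_mul x c,
      mul_comm (⟦x⟧ * ⟦c⟧) (⟦x⟧ : Quotient (sqSetoid hsbm)), ← mul_assoc, idem]
  · rw [← mk_mul, hp', hq', ← mk_mul x (dot c d), ← mk_mul c d,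
      ← mk_mul x c, ← mk_mul x d, mul_mul_mul_comm, idem]
  · rw [← mk_mul, hp', hq', ← mk_mul x (dot c d), ← mk_mul c d,
      ← mk_mul x c, mul_assoc]
  · rw [← mk_mul, hp', hq', ← mk_mul x c, mul_comm]
  · rw [← mk_mul, hp', hq', ← mk_mul x (dot c d), ← mk_mul c d,
      ← mk_mul x d, mul_left_comm]
  · rw [← mk_mul, hp', hq', mk_mul]

theorem shape_congr (hsbm : IsSBM dot m σ) {p q : A → A}
    (hpq : ∀ x, σ (p x) (q x)) (hq : Shape dot σ q) : Shape dot σ p := by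
  rcases hq with hq | ⟨c, hq⟩ | ⟨c, hq⟩
  · exact Or.inl fun x => hsbm.1.1.trans (hpq x) (hq x)
  · exact Or.inr (Or.inl ⟨c, fun x => hsbm.1.1.trans (hpq x) (hq x)⟩)
  · exact Or.inr (Or.inr ⟨c, fun x => hsbm.1.1.trans (hpq x) (hq x)⟩)

theorem upol_shape (hsbm : IsSBM dot m σ) {p : A → A} (hp : UPol dot m p) :
    Shape dot σ p := by
  induction hp with
  | id => exact Or.inl fun x => hsbm.1.1.refl x
  | const a => exact Or.inr (Or.inr ⟨a, fun x => hsbm.1.1.refl a⟩)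
  | dotc _ _ ihp ihq => exact shape_dot hsbm ihp ihq
  | @mc p q r _ _ _ ihp ihq ihr =>
      exact shape_congr hsbm (fun x => hsbm.2.2.2.2.2.1 (p x) (q x) (r x))
        (shape_dot hsbm (shape_dot hsbm ihp ihq) ihr)

end Retract

/-- The retract of an SBM algebra through an idempotent unary polynomial `h` is again
an SBM algebra: on `A₁ = h(A)`, with operations `g₁(x,y) = h(x·y)`,
`m₁(x,y,z) = h(m(x,y,z))` and congruence `σ₁ = σ ∩ (A₁ × A₁)`, the relation `σ₁` is an
equivalence on `A₁` preserved by `g₁` and `m₁`, the operation induced by `g₁` on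
`A₁/σ₁` is a semilattice operation, `g₁` is the first projection on `σ₁`-blocks, `m₁`
is Mal'tsev on `σ₁`-blocks, and `m₁(a,b,c) ≡_{σ₁} g₁(g₁(a,b),c)`. -/
theorem retract_is_SBM {A : Type*} [Fintype A] [Nonempty A]
    (dot : A → A → A) (m : A → A → A → A) (σ : A → A → Prop)
    (hsbm : IsSBM dot m σ)
    (h : A → A) (hpol : UPol dot m h) (hidem : h ∘ h = h) :
    let A₁ : Set A := Set.range h
    let g₁ : A → A → A := fun x y => h (dot x y)
    let m₁ : A → A → A → A := fun x y z => h (m x y z)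
    -- A₁ is closed under g₁ and m₁
    (∀ a ∈ A₁, ∀ b ∈ A₁, g₁ a b ∈ A₁) ∧
    (∀ a ∈ A₁, ∀ b ∈ A₁, ∀ c ∈ A₁, m₁ a b c ∈ A₁) ∧
    -- σ₁ is an equivalence relation on A₁
    (∀ a ∈ A₁, σ a a) ∧
    (∀ a ∈ A₁, ∀ b ∈ A₁, σ a b → σ b a) ∧
    (∀ a ∈ A₁, ∀ b ∈ A₁, ∀ c ∈ A₁, σ a b → σ b c → σ a c) ∧
    -- σ₁ is preserved by g₁ and m₁
    (∀ a ∈ A₁, ∀ a' ∈ A₁, ∀ b ∈ A₁, ∀ b' ∈ A₁,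
      σ a a' → σ b b' → σ (g₁ a b) (g₁ a' b')) ∧
    (∀ a ∈ A₁, ∀ a' ∈ A₁, ∀ b ∈ A₁, ∀ b' ∈ A₁, ∀ c ∈ A₁, ∀ c' ∈ A₁,
      σ a a' → σ b b' → σ c c' → σ (m₁ a b c) (m₁ a' b' c')) ∧
    -- the operation induced by g₁ on A₁/σ₁ is a semilattice operation
    (∀ a ∈ A₁, σ (g₁ a a) a) ∧
    (∀ a ∈ A₁, ∀ b ∈ A₁, σ (g₁ a b) (g₁ b a)) ∧
    (∀ a ∈ A₁, ∀ b ∈ A₁, ∀ c ∈ A₁, σ (g₁ (g₁ a b) c) (g₁ a (g₁ b c))) ∧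
    -- g₁ is the first projection on σ₁-blocks
    (∀ a ∈ A₁, ∀ b ∈ A₁, σ a b → g₁ a b = a) ∧
    -- m₁ is Mal'tsev on σ₁-blocks
    (∀ a ∈ A₁, ∀ b ∈ A₁, σ a b → m₁ a b b = a ∧ m₁ b b a = a) ∧
    -- m₁ ≡_{σ₁} g₁(g₁(·,·),·)
    (∀ a ∈ A₁, ∀ b ∈ A₁, ∀ c ∈ A₁, σ (m₁ a b c) (g₁ (g₁ a b) c)) := by
  intro A₁ g₁ m₁
  have hequiv := hsbm.1.1
  have hdotc := hsbm.1.2.1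
  have hmc := hsbm.1.2.2
  have hcomm := hsbm.2.1
  have hproj := hsbm.2.2.2.1
  have hmal := hsbm.2.2.2.2.1
  have hmdot := hsbm.2.2.2.2.2.1
  have hpres := upol_pres hsbm hpol
  have hfix : ∀ a ∈ A₁, h a = a := by rintro a ⟨w, rfl⟩; exact congrFun hidem w
  letI := qcs hsbm
  have key : ∀ a b : A, σ a b ↔ (⟦a⟧ : Quotient (sqSetoid hsbm)) = ⟦b⟧ :=
    fun a b => ⟨fun hh => Quotient.sound hh, fun hh => Quotient.exact hh⟩
  have mk_mul : ∀ a b : A, (⟦a⟧ : Quotient (sqSetoid hsbm)) * ⟦b⟧ = ⟦dot a b⟧ :=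
    fun a b => rfl
  have idem : ∀ a : A, (⟦a⟧ : Quotient (sqSetoid hsbm)) * ⟦a⟧ = ⟦a⟧ := by
    intro a
    rw [mk_mul, hproj a a (hequiv.refl a)]
  have swap : ∀ z w k : Quotient (sqSetoid hsbm), k * k = k →
      ((z * k) * w) * k = (z * w) * k := by
    intro z w k kk
    rw [mul_assoc z k w, mul_comm k w, ← mul_assoc z w k, mul_assoc (z * w) k k, kk]
  have hsh := upol_shape hsbm hpol
  refine ⟨?_, ?_, ?_, ?_, ?_, ?_, ?_, ?_, ?_, ?_, ?_, ?_, ?_⟩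
  · exact fun a _ b _ => ⟨dot a b, rfl⟩
  · exact fun a _ b _ c _ => ⟨m a b c, rfl⟩
  · exact fun a _ => hequiv.refl a
  · exact fun a _ b _ hab => hequiv.symm hab
  · exact fun a _ b _ c _ hab hbc => hequiv.trans hab hbc
  · exact fun a _ a' _ b _ b' _ h1 h2 => hpres _ _ (hdotc _ _ _ _ h1 h2)
  · exact fun a _ a' _ b _ b' _ c _ c' _ h1 h2 h3 =>
      hpres _ _ (hmc _ _ _ _ _ _ h1 h2 h3)
  · intro a ha
    show σ (h (dot a a)) a
    rw [hproj a a (hequiv.refl a), hfix a ha]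
    exact hequiv.refl a
  · exact fun a _ b _ => hpres _ _ (hcomm a b)
  · intro a _ b _ c _
    show σ (h (dot (h (dot a b)) c)) (h (dot a (h (dot b c))))
    rw [key]
    rcases hsh with hs | ⟨c₀, hs⟩ | ⟨c₀, hs⟩
    · have e : ∀ x : A, (⟦h x⟧ : Quotient (sqSetoid hsbm)) = ⟦x⟧ :=
        fun x => (key _ _).mp (hs x)
      simp only [e, ← mk_mul, mul_assoc]
    · have e : ∀ x : A, (⟦h x⟧ : Quotient (sqSetoid hsbm)) = ⟦x⟧ * ⟦c₀⟧ :=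
        fun x => by rw [mk_mul]; exact (key _ _).mp (hs x)
      have kk := idem c₀
      simp only [e, ← mk_mul]
      rw [swap ((⟦a⟧ : Quotient (sqSetoid hsbm)) * ⟦b⟧) ⟦c⟧ ⟦c₀⟧ kk,
        mul_comm (⟦a⟧ : Quotient (sqSetoid hsbm)) ((⟦b⟧ * ⟦c⟧) * ⟦c₀⟧),
        swap ((⟦b⟧ : Quotient (sqSetoid hsbm)) * ⟦c⟧) ⟦a⟧ ⟦c₀⟧ kk,
        mul_rotate (⟦a⟧ : Quotient (sqSetoid hsbm)) ⟦b⟧ ⟦c⟧]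
    · have e : ∀ x : A, (⟦h x⟧ : Quotient (sqSetoid hsbm)) = ⟦c₀⟧ :=
        fun x => (key _ _).mp (hs x)
      simp only [e]
  · intro a ha b _ hab
    show h (dot a b) = a
    rw [hproj a b hab, hfix a ha]
  · intro a ha b hb hab
    constructor
    · show h (m a b b) = a
      rw [(hmal a b hab).1, hfix a ha]
    · show h (m b b a) = a
      rw [(hmal a b hab).2, hfix a ha]
  · intro a _ b _ c _
    show σ (h (m a b c)) (h (dot (h (dot a b)) c))
    refine hequiv.trans (hpres _ _ (hmdot a b c)) ?_
    rw [key]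
    rcases hsh with hs | ⟨c₀, hs⟩ | ⟨c₀, hs⟩
    · have e : ∀ x : A, (⟦h x⟧ : Quotient (sqSetoid hsbm)) = ⟦x⟧ :=
        fun x => (key _ _).mp (hs x)
      simp only [e, ← mk_mul]
    · have e : ∀ x : A, (⟦h x⟧ : Quotient (sqSetoid hsbm)) = ⟦x⟧ * ⟦c₀⟧ :=
        fun x => by rw [mk_mul]; exact (key _ _).mp (hs x)
      have kk := idem c₀
      simp only [e, ← mk_mul]
      rw [swap ((⟦a⟧ : Quotient (sqSetoid hsbm)) * ⟦b⟧) ⟦c⟧ ⟦c₀⟧ kk]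
    · have e : ∀ x : A, (⟦h x⟧ : Quotient (sqSetoid hsbm)) = ⟦c₀⟧ :=
        fun x => (key _ _).mp (hs x)
      simp only [e]

end SBMPaper
end

section
/- Let R be a subdirect product of SBM algebras A_1, …, A_n, let i ≠ j and α ≺ β ≤ θ_{A_i} in Con(A_i), γ ≺ δ ≤ θ_{A_j} in Con(A_j), and suppose (α,β) can be separated from (γ,δ) in R. Then for any (α,β)-minimal set U of A_i there is a unary polynomial g = (g_1,…,g_n) of R with every g_l idempotent (g_l∘g_l = g_l), such that g_i(A_i) = U and g separates (α,β) from (γ,δ), i.e., g_i(β) ⊄ α and g_j(δ) ⊆ γ. -/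
namespace SBMPaper

section AuxUnary

variable {A : Type*} {dot : A → A → A} {m : A → A → A → A}

theorem UPol_comp {p q : A → A} (hp : UPol dot m p) (hq : UPol dot m q) :
    UPol dot m (fun x => p (q x)) := by
  induction hp with
  | id => exact hq
  | const a => exact UPol.const a
  | dotc h1 h2 ih1 ih2 => exact UPol.dotc ih1 ih2
  | mc h1 h2 h3 ih1 ih2 ih3 => exact UPol.mc ih1 ih2 ih3

theorem UPol_preserves {θ : A → A → Prop} (hθ : IsCong dot m θ) {p : A → A}
    (hp : UPol dot m p) : ∀ a b, θ a b → θ (p a) (p b) := by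
  induction hp with
  | id => exact fun a b h => h
  | const a => exact fun _ _ _ => hθ.1.refl a
  | dotc h1 h2 ih1 ih2 => exact fun a b h => hθ.2.1 _ _ _ _ (ih1 a b h) (ih2 a b h)
  | mc h1 h2 h3 ih1 ih2 ih3 =>
      exact fun a b h => hθ.2.2 _ _ _ _ _ _ (ih1 a b h) (ih2 a b h) (ih3 a b h)

/-- The congruence generated by `α` together with the pair `(c,d)`, described via
Mal'tsev chains of polynomial images. -/
inductive CgA (dot : A → A → A) (m : A → A → A → A) (α : A → A → Prop) (c d : A) :
    A → A → Prop
  | of_alpha {x y : A} : α x y → CgA dot m α c d x y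
  | of_pol {p : A → A} : UPol dot m p → CgA dot m α c d (p c) (p d)
  | symm {x y : A} : CgA dot m α c d x y → CgA dot m α c d y x
  | trans {x y z : A} : CgA dot m α c d x y → CgA dot m α c d y z → CgA dot m α c d x z

variable {α : A → A → Prop} {c d : A}

theorem CgA_dot_left (hα : IsCong dot m α) {x x' : A} (y : A)
    (h : CgA dot m α c d x x') : CgA dot m α c d (dot x y) (dot x' y) := by
  induction h with
  | of_alpha h => exact .of_alpha (hα.2.1 _ _ _ _ h (hα.1.refl y))
  | of_pol hp => exact .of_pol (UPol.dotc hp (UPol.const y))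
  | symm _ ih => exact .symm ih
  | trans _ _ ih1 ih2 => exact .trans ih1 ih2

theorem CgA_dot_right (hα : IsCong dot m α) (x : A) {y y' : A}
    (h : CgA dot m α c d y y') : CgA dot m α c d (dot x y) (dot x y') := by
  induction h with
  | of_alpha h => exact .of_alpha (hα.2.1 _ _ _ _ (hα.1.refl x) h)
  | of_pol hp => exact .of_pol (UPol.dotc (UPol.const x) hp)
  | symm _ ih => exact .symm ih
  | trans _ _ ih1 ih2 => exact .trans ih1 ih2

theorem CgA_m1 (hα : IsCong dot m α) (y z : A) {x x' : A}
    (h : CgA dot m α c d x x') : CgA dot m α c d (m x y z) (m x' y z) := by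
  induction h with
  | of_alpha h => exact .of_alpha (hα.2.2 _ _ _ _ _ _ h (hα.1.refl y) (hα.1.refl z))
  | of_pol hp => exact .of_pol (UPol.mc hp (UPol.const y) (UPol.const z))
  | symm _ ih => exact .symm ih
  | trans _ _ ih1 ih2 => exact .trans ih1 ih2

theorem CgA_m2 (hα : IsCong dot m α) (x z : A) {y y' : A}
    (h : CgA dot m α c d y y') : CgA dot m α c d (m x y z) (m x y' z) := by
  induction h with
  | of_alpha h => exact .of_alpha (hα.2.2 _ _ _ _ _ _ (hα.1.refl x) h (hα.1.refl z))
  | of_pol hp => exact .of_pol (UPol.mc (UPol.const x) hp (UPol.const z))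
  | symm _ ih => exact .symm ih
  | trans _ _ ih1 ih2 => exact .trans ih1 ih2

theorem CgA_m3 (hα : IsCong dot m α) (x y : A) {z z' : A}
    (h : CgA dot m α c d z z') : CgA dot m α c d (m x y z) (m x y z') := by
  induction h with
  | of_alpha h => exact .of_alpha (hα.2.2 _ _ _ _ _ _ (hα.1.refl x) (hα.1.refl y) h)
  | of_pol hp => exact .of_pol (UPol.mc (UPol.const x) (UPol.const y) hp)
  | symm _ ih => exact .symm ih
  | trans _ _ ih1 ih2 => exact .trans ih1 ih2

theorem CgA_isCong (hα : IsCong dot m α) (c d : A) :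
    IsCong dot m (CgA dot m α c d) := by
  refine ⟨⟨fun x => .of_alpha (hα.1.refl x), fun h => .symm h, fun h1 h2 => .trans h1 h2⟩,
    ?_, ?_⟩
  · intro a a' b b' ha hb
    exact .trans (CgA_dot_left hα b ha) (CgA_dot_right hα a' hb)
  · intro a a' b b' e e' ha hb he
    exact .trans (CgA_m1 hα _ _ ha) (.trans (CgA_m2 hα _ _ hb) (CgA_m3 hα _ _ he))

theorem CgA_le_beta {β : A → A → Prop} (hβ : IsCong dot m β) (hαβ : RelLE α β)
    (hcd : β c d) : RelLE (CgA dot m α c d) β := by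
  intro a b h
  induction h with
  | of_alpha h => exact hαβ _ _ h
  | of_pol hp => exact UPol_preserves hβ hp _ _ hcd
  | symm _ ih => exact hβ.1.symm ih
  | trans _ _ ih1 ih2 => exact hβ.1.trans ih1 ih2

theorem beta_eq_CgA {β : A → A → Prop} (hα : IsCong dot m α) (hβ : IsCong dot m β)
    (hpr : PrimeCov (IsCong dot m) α β) (hcd : β c d) (hncd : ¬ α c d) :
    β = CgA dot m α c d := by
  have h2 := CgA.of_pol (dot := dot) (m := m) (α := α) (c := c) (d := d) UPol.id
  rcases hpr.2.2 _ (CgA_isCong hα c d) (fun a b h => .of_alpha h)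
      (CgA_le_beta hβ hpr.1 hcd) with h | h
  · exact absurd (h ▸ h2) hncd
  · exact h.symm

theorem exists_pol_separating {β : A → A → Prop} (hα : IsCong dot m α)
    (hβ : IsCong dot m β) (hpr : PrimeCov (IsCong dot m) α β) {f : A → A}
    (hf : UPol dot m f) (hfsep : ¬ PolMaps f β α) (hcd : β c d) (hncd : ¬ α c d) :
    ∃ h, UPol dot m h ∧ ¬ α (f (h c)) (f (h d)) := by
  by_contra hcon
  push_neg at hcon
  apply hfsep
  intro a b hab
  have hgen : CgA dot m α c d a b := by
    rw [← beta_eq_CgA hα hβ hpr hcd hncd]; exact hab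
  clear hab
  induction hgen with
  | of_alpha h => exact UPol_preserves hα hf _ _ h
  | @of_pol p hp => exact hcon p hp
  | symm _ ih => exact hα.1.symm ih
  | trans _ _ ih1 ih2 => exact hα.1.trans ih1 ih2

end AuxUnary

section AuxRel

variable {n : ℕ} {F : Fin n → Type*} {dot : ∀ i, F i → F i → F i}
  {m : ∀ i, F i → F i → F i → F i} {R : Set (∀ i, F i)}

theorem RPol_proj {p : ∀ i, F i → F i} (hp : RPol dot m R p) (l : Fin n) :
    UPol (dot l) (m l) (p l) := by
  induction hp with
  | id => exact UPol.id
  | const a ha => exact UPol.const (a l)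
  | dotc h1 h2 ih1 ih2 => exact UPol.dotc ih1 ih2
  | mc h1 h2 h3 ih1 ih2 ih3 => exact UPol.mc ih1 ih2 ih3

theorem RPol_comp {p q : ∀ i, F i → F i} (hp : RPol dot m R p)
    (hq : RPol dot m R q) : RPol dot m R (fun l x => p l (q l x)) := by
  induction hp with
  | id => exact hq
  | const a ha => exact RPol.const a ha
  | dotc h1 h2 ih1 ih2 => exact RPol.dotc ih1 ih2
  | mc h1 h2 h3 ih1 ih2 ih3 => exact RPol.mc ih1 ih2 ih3

theorem RPol_lift (hR : SubdirectProd dot m R) (i : Fin n) {q : F i → F i}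
    (hq : UPol (dot i) (m i) q) : ∃ p, RPol dot m R p ∧ p i = q := by
  induction hq with
  | id => exact ⟨_, RPol.id, rfl⟩
  | const a =>
      obtain ⟨x, hx, hxi⟩ := hR.2.2.2 i a
      exact ⟨_, RPol.const x hx, by funext y; exact hxi⟩
  | @dotc q1 q2 h1 h2 ih1 ih2 =>
      obtain ⟨p1, hp1, he1⟩ := ih1
      obtain ⟨p2, hp2, he2⟩ := ih2
      refine ⟨_, RPol.dotc hp1 hp2, ?_⟩
      funext y
      show dot i (p1 i y) (p2 i y) = _
      rw [he1, he2]
  | @mc q1 q2 q3 h1 h2 h3 ih1 ih2 ih3 =>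
      obtain ⟨p1, hp1, he1⟩ := ih1
      obtain ⟨p2, hp2, he2⟩ := ih2
      obtain ⟨p3, hp3, he3⟩ := ih3
      refine ⟨_, RPol.mc hp1 hp2 hp3, ?_⟩
      funext y
      show m i (p1 i y) (p2 i y) (p3 i y) = _
      rw [he1, he2, he3]

theorem RPol_iter {p : ∀ i, F i → F i} (hp : RPol dot m R p) (K : ℕ) :
    RPol dot m R (fun l => (p l)^[K]) := by
  induction K with
  | zero => exact RPol.id
  | succ K ih =>
      have he : (fun l => (p l)^[K + 1]) = fun l x => p l ((p l)^[K] x) := by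
        funext l x; exact Function.iterate_succ_apply' (p l) K x
      rw [he]
      exact RPol_comp hp ih

end AuxRel

theorem exists_idem_exponent {X : Type*} [Finite X] (f : X → X) :
    ∃ K, 1 ≤ K ∧ ∀ c, 1 ≤ c → f^[K * c] = f^[K] := by
  have main : ∀ a b : ℕ, a < b → f^[a] = f^[b] →
      ∃ K, 1 ≤ K ∧ ∀ c, 1 ≤ c → f^[K * c] = f^[K] := by
    intro a b hab he
    have hp1 : 1 ≤ b - a := by omega
    have hstepp : ∀ u, a ≤ u → f^[u + (b - a)] = f^[u] := by
      intro u hu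
      obtain ⟨s, rfl⟩ : ∃ s, u = a + s := ⟨u - a, by omega⟩
      have h1 : a + s + (b - a) = b + s := by omega
      rw [h1, Function.iterate_add f b s, ← he, ← Function.iterate_add f a s]
    have hmult : ∀ (t u : ℕ), a ≤ u → f^[u + t * (b - a)] = f^[u] := by
      intro t
      induction t with
      | zero => intro u hu; simp
      | succ t ih =>
          intro u hu
          have h1 : u + (t + 1) * (b - a) = (u + t * (b - a)) + (b - a) := by ring
          rw [h1, hstepp (u + t * (b - a)) (by omega), ih u hu]
    refine ⟨(a + 1) * (b - a), Nat.mul_pos (Nat.succ_pos a) hp1, ?_⟩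
    intro c hc
    obtain ⟨c', rfl⟩ : ∃ c', c = c' + 1 := ⟨c - 1, by omega⟩
    have h2 : (a + 1) * (b - a) * (c' + 1)
        = (a + 1) * (b - a) + ((a + 1) * c') * (b - a) := by ring
    rw [h2, hmult ((a + 1) * c') ((a + 1) * (b - a)) (by nlinarith)]
  obtain ⟨a, b, hab, he⟩ := Finite.exists_ne_map_eq_of_infinite (fun k : ℕ => f^[k])
  rcases hab.lt_or_gt with h | h
  · exact main a b h he
  · exact main b a h he.symm

theorem exists_uniform_idem {n : ℕ} {F : Fin n → Type*} [∀ l, Finite (F l)]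
    (t : ∀ l, F l → F l) :
    ∃ K, 1 ≤ K ∧ ∀ l, ((t l)^[K]) ∘ ((t l)^[K]) = (t l)^[K] := by
  choose K hK1 hK2 using fun l => exists_idem_exponent (t l)
  refine ⟨∏ l, K l, Finset.one_le_prod' (fun l _ => hK1 l), ?_⟩
  intro l
  have hsplit : (∏ l', K l') = K l * ∏ l' ∈ Finset.univ.erase l, K l' :=
    (Finset.mul_prod_erase Finset.univ K (Finset.mem_univ l)).symm
  have hc : 1 ≤ ∏ l' ∈ Finset.univ.erase l, K l' :=
    Finset.one_le_prod' (fun l' _ => hK1 l')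
  have h1 : (t l)^[∏ l', K l'] = (t l)^[K l] := by
    rw [hsplit]; exact hK2 l _ hc
  rw [h1, ← Function.iterate_add]
  have h2 : K l + K l = K l * 2 := by ring
  rw [h2]
  exact hK2 l 2 (by omega)

end SBMPaper


namespace SBMPaper

/-- If `(α,β)` at coordinate `i` can be separated from `(γ,δ)` at coordinate `j` in a
subdirect product `R` of SBM algebras, then for any `(α,β)`-minimal set `U` of `A_i`
there is an idempotent unary polynomial `g` of `R` with `g_i(A_i) = U` separating
`(α,β)` from `(γ,δ)`. -/
theorem separating_polynomial_onto_minimal_set {n : ℕ} {F : Fin n → Type*}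
    [∀ i, Fintype (F i)] [∀ i, Nonempty (F i)]
    (dot : ∀ i, F i → F i → F i) (m : ∀ i, F i → F i → F i → F i)
    (σ : ∀ i, F i → F i → Prop)
    (hsbm : ∀ i, IsSBM (dot i) (m i) (σ i))
    (R : Set (∀ i, F i)) (hR : SubdirectProd dot m R)
    (i j : Fin n) (hij : i ≠ j)
    (α β : F i → F i → Prop) (hi : InIR dot m σ i α β)
    (γ δ : F j → F j → Prop) (hj : InIR dot m σ j γ δ)
    (hsep : SepIn dot m R i α β j γ δ)
    (U : Set (F i)) (hU : IsMinSetP (UPol (dot i) (m i)) α β U) :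
    ∃ g, RPol dot m R g ∧ (∀ l : Fin n, (g l) ∘ (g l) = g l) ∧
      Set.range (g i) = U ∧ ¬ PolMaps (g i) β α ∧ PolMaps (g j) δ γ := by
  classical
  obtain ⟨hαc, hβc, hpr, -⟩ := hi
  obtain ⟨hγc, hδc, -, -⟩ := hj
  obtain ⟨p0, hp0, hp0i, hp0j⟩ := hsep
  obtain ⟨q0, hq0, hq0r, hq0s⟩ := hU.1
  -- a witness pair where `p0 i` does not collapse `β` into `α`
  have hp0i' : ∃ a b, β a b ∧ ¬ α (p0 i a) (p0 i b) := by
    by_contra h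
    push_neg at h
    exact hp0i fun a b hab => h a b hab
  obtain ⟨a0, b0, hab0, hnab0⟩ := hp0i'
  have hc0d0 : β (p0 i a0) (p0 i b0) := UPol_preserves hβc (RPol_proj hp0 i) _ _ hab0
  -- a polynomial `h0` such that `q0 ∘ h0` does not collapse the witness pair
  obtain ⟨h0, hh0, hql⟩ := exists_pol_separating hαc hβc hpr hq0 hq0s hc0d0 hnab0
  have hq0h0 : UPol (dot i) (m i) (fun x => q0 (h0 x)) := UPol_comp hq0 hh0
  obtain ⟨Q, hQ, hQi⟩ := RPol_lift hR i hq0h0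
  -- the basic separating polynomial `f` with range inside `U` at coordinate `i`
  obtain ⟨f, hf, hfi, hfiU, hfij, hfj⟩ :
      ∃ f, RPol dot m R f ∧ (∀ x, f i x = q0 (h0 (p0 i x))) ∧ (∀ x, f i x ∈ U) ∧
        ¬ PolMaps (f i) β α ∧ PolMaps (f j) δ γ := by
    refine ⟨fun l x => Q l (p0 l x), RPol_comp hQ hp0, ?_, ?_, ?_, ?_⟩
    · intro x
      show Q i (p0 i x) = _
      rw [hQi]
    · intro x
      show Q i (p0 i x) ∈ U
      rw [hQi, ← hq0r]
      exact ⟨_, rfl⟩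
    · intro h
      have h2 := h a0 b0 hab0
      have e1 : (fun l x => Q l (p0 l x)) i a0 = q0 (h0 (p0 i a0)) := by
        show Q i (p0 i a0) = _; rw [hQi]
      have e2 : (fun l x => Q l (p0 l x)) i b0 = q0 (h0 (p0 i b0)) := by
        show Q i (p0 i b0) = _; rw [hQi]
      rw [e1, e2] at h2
      exact hql h2
    · intro a b hab
      exact UPol_preserves hγc (RPol_proj hQ j) _ _ (hp0j a b hab)
  -- the one-step lemma on non-collapsed pairs
  have hstep : ∀ s : {q : F i × F i // β q.1 q.2 ∧ ¬ α q.1 q.2},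
      ∃ s' : {q : F i × F i // β q.1 q.2 ∧ ¬ α q.1 q.2},
      ∃ t, RPol dot m R t ∧ PolMaps (t j) δ γ ∧ (∀ x, t i x ∈ U) ∧
        t i s.1.1 = s'.1.1 ∧ t i s.1.2 = s'.1.2 := by
    rintro ⟨⟨c, d⟩, hcd, hncd⟩
    obtain ⟨h, hh, hsep'⟩ :=
      exists_pol_separating hαc hβc hpr (RPol_proj hf i) hfij hcd hncd
    obtain ⟨H, hH, hHi⟩ := RPol_lift hR i hh
    have hβ' : β (f i (h c)) (f i (h d)) :=
      UPol_preserves hβc (RPol_proj hf i) _ _ (UPol_preserves hβc hh _ _ hcd)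
    refine ⟨⟨(f i (h c), f i (h d)), hβ', hsep'⟩,
      fun l x => f l (H l x), RPol_comp hf hH, ?_, ?_, ?_, ?_⟩
    · intro a b hab
      exact hfj _ _ (UPol_preserves hδc (RPol_proj hH j) _ _ hab)
    · intro x
      exact hfiU _
    · show f i (H i c) = f i (h c)
      rw [hHi]
    · show f i (H i d) = f i (h d)
      rw [hHi]
  choose Φ T hT1 hT2 hT3 hT4 hT5 using hstep
  -- iterating the one-step lemma along the orbit of `Φ`
  have horb : ∀ (r : ℕ) (s : {q : F i × F i // β q.1 q.2 ∧ ¬ α q.1 q.2}),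
      ∃ t, RPol dot m R t ∧ PolMaps (t j) δ γ ∧ (∀ x, t i x ∈ U) ∧
        t i s.1.1 = (Φ^[r + 1] s).1.1 ∧ t i s.1.2 = (Φ^[r + 1] s).1.2 := by
    intro r
    induction r with
    | zero =>
        intro s
        refine ⟨T s, hT1 s, hT2 s, hT3 s, ?_, ?_⟩
        · rw [Function.iterate_one]; exact hT4 s
        · rw [Function.iterate_one]; exact hT5 s
    | succ r ih =>
        intro s
        obtain ⟨t, ht, htj, htU, htc, htd⟩ := ih s
        refine ⟨fun l x => T (Φ^[r + 1] s) l (t l x), RPol_comp (hT1 _) ht,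
          ?_, ?_, ?_, ?_⟩
        · intro a b hab
          exact UPol_preserves hγc (RPol_proj (hT1 _) j) _ _ (htj _ _ hab)
        · intro x
          exact hT3 _ _
        · show T (Φ^[r + 1] s) i (t i s.1.1) = _
          rw [htc, hT4 (Φ^[r + 1] s), ← Function.iterate_succ_apply' Φ (r + 1) s]
        · show T (Φ^[r + 1] s) i (t i s.1.2) = _
          rw [htd, hT5 (Φ^[r + 1] s), ← Function.iterate_succ_apply' Φ (r + 1) s]
  -- the initial non-collapsed pair
  have hs0p : β (f i a0) (f i b0) ∧ ¬ α (f i a0) (f i b0) := by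
    constructor
    · exact UPol_preserves hβc (RPol_proj hf i) _ _ hab0
    · rw [hfi, hfi]
      exact hql
  -- pigeonhole on the orbit of the initial pair
  obtain ⟨k, l, hkl, he⟩ : ∃ k l : ℕ, k < l ∧
      Φ^[k] ⟨(f i a0, f i b0), hs0p⟩ = Φ^[l] ⟨(f i a0, f i b0), hs0p⟩ := by
    obtain ⟨k, l, hkl, he⟩ :=
      Finite.exists_ne_map_eq_of_infinite (fun k : ℕ => Φ^[k] ⟨(f i a0, f i b0), hs0p⟩)
    rcases hkl.lt_or_gt with h | h
    · exact ⟨k, l, h, he⟩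
    · exact ⟨l, k, h, he.symm⟩
  obtain ⟨t, ht, htj, htU, htc, htd⟩ := horb (l - k - 1) (Φ^[k] ⟨(f i a0, f i b0), hs0p⟩)
  have hrr : l - k - 1 + 1 = l - k := by omega
  rw [hrr] at htc htd
  have hfix : Φ^[l - k] (Φ^[k] ⟨(f i a0, f i b0), hs0p⟩)
      = Φ^[k] ⟨(f i a0, f i b0), hs0p⟩ := by
    rw [← Function.iterate_add_apply]
    have h2 : l - k + k = l := by omega
    rw [h2]
    exact he.symm
  rw [hfix] at htc htd
  obtain ⟨hβstar, hnαstar⟩ := (Φ^[k] ⟨(f i a0, f i b0), hs0p⟩).2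
  -- pass to an idempotent power
  obtain ⟨K, hK1, hKidem⟩ := exists_uniform_idem t
  obtain ⟨K', rfl⟩ : ∃ K', K = K' + 1 := ⟨K - 1, by omega⟩
  have hgiU : UPol (dot i) (m i) ((t i)^[K' + 1]) := RPol_proj (RPol_iter ht (K' + 1)) i
  have hgic : (t i)^[K' + 1] (Φ^[k] ⟨(f i a0, f i b0), hs0p⟩).1.1
      = (Φ^[k] ⟨(f i a0, f i b0), hs0p⟩).1.1 := Function.iterate_fixed htc (K' + 1)
  have hgid : (t i)^[K' + 1] (Φ^[k] ⟨(f i a0, f i b0), hs0p⟩).1.2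
      = (Φ^[k] ⟨(f i a0, f i b0), hs0p⟩).1.2 := Function.iterate_fixed htd (K' + 1)
  have hgsep : ¬ PolMaps ((t i)^[K' + 1]) β α := by
    intro h
    have h2 := h _ _ hβstar
    rw [hgic, hgid] at h2
    exact hnαstar h2
  have hrange : Set.range ((t i)^[K' + 1]) = U := by
    apply hU.2
    · exact ⟨_, hgiU, rfl, hgsep⟩
    · rintro y ⟨x, rfl⟩
      rw [Function.iterate_succ_apply']
      exact htU _
  have hγiter : ∀ (r : ℕ) (a b : F j), γ a b → γ ((t j)^[r] a) ((t j)^[r] b) := by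
    intro r
    induction r with
    | zero => exact fun a b h => h
    | succ r ih =>
        intro a b h
        rw [Function.iterate_succ_apply', Function.iterate_succ_apply']
        exact UPol_preserves hγc (RPol_proj ht j) _ _ (ih a b h)
  have hgj : PolMaps ((t j)^[K' + 1]) δ γ := by
    intro a b hab
    rw [Function.iterate_succ_apply, Function.iterate_succ_apply]
    exact hγiter K' _ _ (htj _ _ hab)
  exact ⟨fun l => (t l)^[K' + 1], RPol_iter ht (K' + 1), hKidem, hrange, hgsep, hgj⟩

end SBMPaper
end

section
/- Let R be a subdirect product of SBM algebras A_1, …, A_n, let i ≠ j and α ≺ β ≤ θ_{A_i} in Con(A_i), γ ≺ δ ≤ θ_{A_j} in Con(A_j). If (α,β) can be separated from (γ,δ) in R, then (γ,δ) can be separated from (α,β) in R; that is, the relation 'cannot be separated' is symmetric. -/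
/-!
Let `p` separate `(α,β)` at `i` from `(γ,δ)` at `j`. Since `α ≺ β`, the polynomials mapping
`δ` into `γ` then move every `β`-pair `(a,b)` outside `α`. Relating `u, v` when they are
`≡_α` to `q a, q b` for such a `q` with values in `max` at `i` and `j` gives, thanks to the
Mal'tsev operation on `max` (which swaps and glues such pairs), a congruence strictly above `α`,
hence `β`: some such `e` fixes `a` and `b` modulo `α`. Plugging these fixers into
`m(x, e(x), e(d))` for a `δ`-pair `(d, d')` outside `γ` collapses `β`-pairs into `α` one at a
time while staying the identity modulo `γ` on the `δ`-class of `d`; by finiteness this ends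
with a polynomial that separates `(γ,δ)` from `(α,β)`.
-/

namespace SBMPaper

section Algebra

variable {A : Type*} {dot : A → A → A} {m : A → A → A → A}

namespace IsCong

variable {θ : A → A → Prop}

theorem refl (h : IsCong dot m θ) (a : A) : θ a a := h.1.refl a

theorem symm (h : IsCong dot m θ) {a b : A} : θ a b → θ b a := h.1.symm

theorem trans (h : IsCong dot m θ) {a b c : A} : θ a b → θ b c → θ a c := h.1.trans

theorem dot_congr (h : IsCong dot m θ) {a a' b b' : A} (ha : θ a a') (hb : θ b b') :
    θ (dot a b) (dot a' b') :=
  h.2.1 _ _ _ _ ha hb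

theorem m_congr (h : IsCong dot m θ) {a a' b b' c c' : A} (ha : θ a a') (hb : θ b b')
    (hc : θ c c') : θ (m a b c) (m a' b' c') :=
  h.2.2 _ _ _ _ _ _ ha hb hc

end IsCong

theorem PrimeCov.exists_rel_not_rel {Cong : (A → A → Prop) → Prop} {α β : A → A → Prop}
    (h : PrimeCov Cong α β) : ∃ a b, β a b ∧ ¬ α a b := by
  by_contra! hβα
  exact h.2.1 (funext fun a => funext fun b => propext ⟨h.1 a b, hβα a b⟩)

variable {σ : A → A → Prop}

namespace IsSBM

theorem inMax_of_sigma (h : IsSBM dot m σ) {x y : A} (hxy : σ x y)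
    (hx : InMax dot σ x) : InMax dot σ y := fun b =>
  h.1.trans (h.1.trans (h.1.dot_congr (h.1.refl b) (h.1.symm hxy)) (hx b)) hxy

theorem sigma_of_inMax (h : IsSBM dot m σ) {x y : A} (hx : InMax dot σ x)
    (hy : InMax dot σ y) : σ x y :=
  h.1.trans (h.1.symm (hx y)) (h.1.trans (h.1.symm (h.2.1 x y)) (hy x))

theorem inMax_dot_of_right (h : IsSBM dot m σ) {y : A} (hy : InMax dot σ y) (c : A) :
    InMax dot σ (dot c y) := fun b =>
  h.1.trans (h.1.trans (h.1.symm (h.2.2.1 b c y)) (hy (dot b c))) (h.1.symm (hy c))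

theorem dot_eq_self_of_inMax (h : IsSBM dot m σ) {x : A} (hx : InMax dot σ x) (c : A) :
    dot x c = x := by
  have hxc : InMax dot σ (dot x c) := fun b =>
    h.1.trans (h.1.symm (h.2.2.1 b x c)) (h.1.dot_congr (hx b) (h.1.refl c))
  rw [← h.2.2.2.2.2.2 x c]
  exact h.2.2.2.1 _ _ (h.sigma_of_inMax hx hxc)

theorem inMax_dot_of_left (h : IsSBM dot m σ) {x : A} (hx : InMax dot σ x) (c : A) :
    InMax dot σ (dot x c) := by
  rwa [h.dot_eq_self_of_inMax hx]

theorem inMax_m (h : IsSBM dot m σ) {a b c : A}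
    (habc : InMax dot σ a ∨ InMax dot σ b ∨ InMax dot σ c) : InMax dot σ (m a b c) := by
  refine h.inMax_of_sigma (h.1.symm (h.2.2.2.2.2.1 a b c)) ?_
  rcases habc with ha | hb | hc
  · exact h.inMax_dot_of_left (h.inMax_dot_of_left ha b) c
  · exact h.inMax_dot_of_left (h.inMax_dot_of_right hb a) c
  · exact h.inMax_dot_of_right hc _

theorem m_eq_left_of_inMax (h : IsSBM dot m σ) {a b : A} (ha : InMax dot σ a)
    (hb : InMax dot σ b) : m a b b = a :=
  (h.2.2.2.2.1 a b (h.sigma_of_inMax ha hb)).1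

theorem m_eq_right_of_inMax (h : IsSBM dot m σ) {a b : A} (ha : InMax dot σ a)
    (hb : InMax dot σ b) : m b b a = a :=
  (h.2.2.2.2.1 a b (h.sigma_of_inMax ha hb)).2

end IsSBM

theorem inMax_of_thetaA {a b : A} (h : ThetaA dot σ a b) (hb : InMax dot σ b) :
    InMax dot σ a := by
  rcases h with rfl | ⟨ha, -⟩
  exacts [hb, ha]

theorem inMax_of_not_rel {α β : A → A → Prop} (hβθ : RelLE β (ThetaA dot σ))
    (hα : Equivalence α) {a b : A} (hab : β a b) (hnab : ¬ α a b) :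
    InMax dot σ a ∧ InMax dot σ b := by
  rcases hβθ a b hab with rfl | hmax
  exacts [absurd (hα.refl a) hnab, hmax]

end Algebra

section Subdirect

variable {n : ℕ} {F : Fin n → Type*}

inductive BasicTranslation (dot : ∀ k, F k → F k → F k) (m : ∀ k, F k → F k → F k → F k)
    (R : Set (∀ k, F k)) : (∀ k, F k → F k) → Prop
  | dotLeft {c : ∀ k, F k} : c ∈ R → BasicTranslation dot m R fun k x => dot k x (c k)
  | dotRight {c : ∀ k, F k} : c ∈ R → BasicTranslation dot m R fun k x => dot k (c k) x
  | mFst {c c' : ∀ k, F k} : c ∈ R → c' ∈ R →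
      BasicTranslation dot m R fun k x => m k x (c k) (c' k)
  | mSnd {c c' : ∀ k, F k} : c ∈ R → c' ∈ R →
      BasicTranslation dot m R fun k x => m k (c k) x (c' k)
  | mThd {c c' : ∀ k, F k} : c ∈ R → c' ∈ R →
      BasicTranslation dot m R fun k x => m k (c k) (c' k) x

variable {dot : ∀ k, F k → F k → F k} {m : ∀ k, F k → F k → F k → F k}
  {R : Set (∀ k, F k)} {p q : ∀ k, F k → F k}

theorem RPol.apply_mem (hR : SubdirectProd dot m R) (hp : RPol dot m R p) {x : ∀ k, F k}
    (hx : x ∈ R) : (fun k => p k (x k)) ∈ R := by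
  induction hp with
  | id => exact hx
  | const a ha => exact ha
  | dotc _ _ ihp ihq => exact hR.2.1 _ ihp _ ihq
  | mc _ _ _ ihp ihq ihr => exact hR.2.2.1 _ ihp _ ihq _ ihr

theorem RPol.comp (hp : RPol dot m R p) (hq : RPol dot m R q) :
    RPol dot m R fun k x => p k (q k x) := by
  induction hp with
  | id => exact hq
  | const a ha => exact RPol.const a ha
  | dotc _ _ ih₁ ih₂ => exact RPol.dotc ih₁ ih₂
  | mc _ _ _ ih₁ ih₂ ih₃ => exact RPol.mc ih₁ ih₂ ih₃

theorem RPol.polMaps (hp : RPol dot m R p) {k : Fin n} {θ : F k → F k → Prop}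
    (hθ : IsCong (dot k) (m k) θ) : PolMaps (p k) θ θ := by
  induction hp with
  | id => exact fun _ _ h => h
  | const => exact fun _ _ _ => hθ.refl _
  | dotc _ _ ih₁ ih₂ => exact fun a b h => hθ.dot_congr (ih₁ a b h) (ih₂ a b h)
  | mc _ _ _ ih₁ ih₂ ih₃ =>
      exact fun a b h => hθ.m_congr (ih₁ a b h) (ih₂ a b h) (ih₃ a b h)

theorem BasicTranslation.rpol (hτ : BasicTranslation dot m R p) : RPol dot m R p := by
  cases hτ with
  | dotLeft hc => exact .dotc .id (.const _ hc)
  | dotRight hc => exact .dotc (.const _ hc) .id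
  | mFst hc hc' => exact .mc .id (.const _ hc) (.const _ hc')
  | mSnd hc hc' => exact .mc (.const _ hc) .id (.const _ hc')
  | mThd hc hc' => exact .mc (.const _ hc) (.const _ hc') .id

theorem BasicTranslation.inMax_apply {σ : ∀ k, F k → F k → Prop}
    (hτ : BasicTranslation dot m R p) {k : Fin n} (hk : IsSBM (dot k) (m k) (σ k))
    {x : F k} (hx : InMax (dot k) (σ k) x) : InMax (dot k) (σ k) (p k x) := by
  cases hτ with
  | dotLeft => exact hk.inMax_dot_of_left hx _
  | dotRight => exact hk.inMax_dot_of_right hx _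
  | mFst => exact hk.inMax_m (.inl hx)
  | mSnd => exact hk.inMax_m (.inr (.inl hx))
  | mThd => exact hk.inMax_m (.inr (.inr hx))

/-- Subdirectness makes every translation of `F i` the `i`-th component of a basic
translation of `R`. -/
theorem isCong_of_forall_basicTranslation (hR : SubdirectProd dot m R) {i : Fin n}
    {θ : F i → F i → Prop} (hθ : Equivalence θ)
    (hinv : ∀ τ, BasicTranslation dot m R τ → PolMaps (τ i) θ θ) :
    IsCong (dot i) (m i) θ := by
  obtain ⟨-, -, -, hlift⟩ := hR
  refine ⟨hθ, fun a a' b b' ha hb => ?_, fun a a' b b' c c' ha hb hc => ?_⟩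
  · obtain ⟨y, hy, rfl⟩ := hlift i b
    obtain ⟨x, hx, rfl⟩ := hlift i a'
    exact hθ.trans (hinv _ (.dotLeft hy) _ _ ha) (hinv _ (.dotRight hx) _ _ hb)
  · obtain ⟨y, hy, rfl⟩ := hlift i b
    obtain ⟨z, hz, rfl⟩ := hlift i c
    obtain ⟨x, hx, rfl⟩ := hlift i a'
    obtain ⟨y', hy', rfl⟩ := hlift i b'
    exact hθ.trans (hinv _ (.mFst hy hz) _ _ ha)
      (hθ.trans (hinv _ (.mSnd hx hz) _ _ hb) (hinv _ (.mThd hx hy') _ _ hc))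

end Subdirect

section Separation

variable {n : ℕ} {F : Fin n → Type*}

def MaxCollapser (dot : ∀ k, F k → F k → F k) (m : ∀ k, F k → F k → F k → F k)
    (σ : ∀ k, F k → F k → Prop) (R : Set (∀ k, F k)) (i j : Fin n)
    (γ δ : F j → F j → Prop) (q : ∀ k, F k → F k) : Prop :=
  RPol dot m R q ∧ PolMaps (q j) δ γ ∧ (∀ x, InMax (dot i) (σ i) (q i x)) ∧
    ∀ y, InMax (dot j) (σ j) (q j y)

def FixRel (dot : ∀ k, F k → F k → F k) (m : ∀ k, F k → F k → F k → F k)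
    (σ : ∀ k, F k → F k → Prop) (R : Set (∀ k, F k)) (i j : Fin n)
    (α : F i → F i → Prop) (γ δ : F j → F j → Prop) (a b u v : F i) : Prop :=
  α u v ∨ ∃ q, MaxCollapser dot m σ R i j γ δ q ∧ α u (q i a) ∧ α v (q i b)

variable {dot : ∀ k, F k → F k → F k} {m : ∀ k, F k → F k → F k → F k}
  {σ : ∀ k, F k → F k → Prop} {R : Set (∀ k, F k)} {i j : Fin n}
  {α β : F i → F i → Prop} {γ δ : F j → F j → Prop} {q r : ∀ k, F k → F k}

theorem exists_mem_inMax_inMax (hR : SubdirectProd dot m R)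
    (hσi : IsSBM (dot i) (m i) (σ i)) (hσj : IsSBM (dot j) (m j) (σ j))
    {a : F i} (ha : InMax (dot i) (σ i) a) {b : F j} (hb : InMax (dot j) (σ j) b) :
    ∃ s ∈ R, InMax (dot i) (σ i) (s i) ∧ InMax (dot j) (σ j) (s j) := by
  obtain ⟨x, hx, rfl⟩ := hR.2.2.2 i a
  obtain ⟨y, hy, rfl⟩ := hR.2.2.2 j b
  exact ⟨_, hR.2.1 x hx y hy, hσi.inMax_dot_of_left ha _, hσj.inMax_dot_of_right hb _⟩

theorem maxCollapser_dot_const (hσi : IsSBM (dot i) (m i) (σ i))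
    (hσj : IsSBM (dot j) (m j) (σ j)) (hγ : IsCong (dot j) (m j) γ)
    (hr : RPol dot m R r) (hrδ : PolMaps (r j) δ γ) {s : ∀ k, F k} (hs : s ∈ R)
    (hsi : InMax (dot i) (σ i) (s i)) (hsj : InMax (dot j) (σ j) (s j)) :
    MaxCollapser dot m σ R i j γ δ fun k x => dot k (r k x) (s k) :=
  ⟨.dotc hr (.const s hs), fun a b h => hγ.dot_congr (hrδ a b h) (hγ.refl _),
    fun _ => hσi.inMax_dot_of_right hsi _, fun _ => hσj.inMax_dot_of_right hsj _⟩

namespace MaxCollapser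

theorem comp_basicTranslation (hσi : IsSBM (dot i) (m i) (σ i))
    (hσj : IsSBM (dot j) (m j) (σ j)) (hγ : IsCong (dot j) (m j) γ)
    (hq : MaxCollapser dot m σ R i j γ δ q) {τ : ∀ k, F k → F k}
    (hτ : BasicTranslation dot m R τ) :
    MaxCollapser dot m σ R i j γ δ fun k x => τ k (q k x) :=
  ⟨hτ.rpol.comp hq.1, fun a b h => hτ.rpol.polMaps hγ _ _ (hq.2.1 a b h),
    fun x => hτ.inMax_apply hσi (hq.2.2.1 x), fun y => hτ.inMax_apply hσj (hq.2.2.2 y)⟩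

theorem exists_swap (hR : SubdirectProd dot m R) (hσi : IsSBM (dot i) (m i) (σ i))
    (hσj : IsSBM (dot j) (m j) (σ j)) (hγ : IsCong (dot j) (m j) γ)
    (hq : MaxCollapser dot m σ R i j γ δ q) (a b : F i) :
    ∃ q', MaxCollapser dot m σ R i j γ δ q' ∧ q' i a = q i b ∧ q' i b = q i a := by
  obtain ⟨hqR, hqδ, hqi, hqj⟩ := hq
  obtain ⟨x, hx, rfl⟩ := hR.2.2.2 i a
  obtain ⟨y, hy, rfl⟩ := hR.2.2.2 i b
  refine ⟨fun k u => m k (q k (x k)) (q k u) (q k (y k)),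
    ⟨.mc (.const _ (hqR.apply_mem hR hx)) hqR (.const _ (hqR.apply_mem hR hy)),
      fun u v h => hγ.m_congr (hγ.refl _) (hqδ u v h) (hγ.refl _),
      fun u => hσi.inMax_m (.inr (.inl (hqi u))), fun u => hσj.inMax_m (.inr (.inl (hqj u)))⟩,
    hσi.m_eq_right_of_inMax (hqi _) (hqi _), hσi.m_eq_left_of_inMax (hqi _) (hqi _)⟩

theorem exists_glue (hR : SubdirectProd dot m R) (hσi : IsSBM (dot i) (m i) (σ i))
    (hσj : IsSBM (dot j) (m j) (σ j)) (hα : IsCong (dot i) (m i) α)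
    (hγ : IsCong (dot j) (m j) γ) (hq : MaxCollapser dot m σ R i j γ δ q)
    (hr : MaxCollapser dot m σ R i j γ δ r) {a b : F i} (hqr : α (q i b) (r i a)) :
    ∃ q', MaxCollapser dot m σ R i j γ δ q' ∧ α (q' i a) (q i a) ∧ q' i b = r i b := by
  obtain ⟨hqR, hqδ, hqi, hqj⟩ := hq
  obtain ⟨y, hy, rfl⟩ := hR.2.2.2 i b
  refine ⟨fun k u => m k (q k u) (q k (y k)) (r k u),
    ⟨.mc hqR (.const _ (hqR.apply_mem hR hy)) hr.1,
      fun u v h => hγ.m_congr (hqδ u v h) (hγ.refl _) (hr.2.1 u v h),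
      fun u => hσi.inMax_m (.inl (hqi u)), fun u => hσj.inMax_m (.inl (hqj u))⟩, ?_,
    hσi.m_eq_right_of_inMax (hr.2.2.1 _) (hqi _)⟩
  calc α (m i (q i a) (q i (y i)) (r i a)) (m i (q i a) (q i (y i)) (q i (y i))) :=
        hα.m_congr (hα.refl _) (hα.refl _) (hα.symm hqr)
    _ = q i a := by rw [hσi.m_eq_left_of_inMax (hqi _) (hqi _)]

end MaxCollapser

theorem isCong_fixRel (hR : SubdirectProd dot m R) (hσi : IsSBM (dot i) (m i) (σ i))
    (hσj : IsSBM (dot j) (m j) (σ j)) (hα : IsCong (dot i) (m i) α)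
    (hγ : IsCong (dot j) (m j) γ) (a b : F i) :
    IsCong (dot i) (m i) (FixRel dot m σ R i j α γ δ a b) := by
  refine isCong_of_forall_basicTranslation hR ⟨fun u => .inl (hα.refl u), ?_, ?_⟩ ?_
  · rintro u v (huv | ⟨q, hq, hu, hv⟩)
    · exact .inl (hα.symm huv)
    · obtain ⟨q', hq', hab, hba⟩ := hq.exists_swap hR hσi hσj hγ a b
      exact .inr ⟨q', hq', hab ▸ hv, hba ▸ hu⟩
  · rintro u v w (huv | ⟨q, hq, hu, hv⟩) (hvw | ⟨r, hr, hv', hw⟩)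
    · exact .inl (hα.trans huv hvw)
    · exact .inr ⟨r, hr, hα.trans huv hv', hw⟩
    · exact .inr ⟨q, hq, hu, hα.trans (hα.symm hvw) hv⟩
    · obtain ⟨q', hq', ha', hb'⟩ :=
        hq.exists_glue hR hσi hσj hα hγ hr (hα.trans (hα.symm hv) hv')
      exact .inr ⟨q', hq', hα.trans hu (hα.symm ha'), hb' ▸ hw⟩
  · rintro τ hτ u v (huv | ⟨q, hq, hu, hv⟩)
    · exact .inl (hτ.rpol.polMaps hα _ _ huv)
    · exact .inr ⟨_, hq.comp_basicTranslation hσi hσj hγ hτ,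
        hτ.rpol.polMaps hα _ _ hu, hτ.rpol.polMaps hα _ _ hv⟩

/-- As `α ≺ β`, the `β`-pairs that all polynomials mapping `δ` into `γ` keep in `α` form
a congruence strictly below `β`, hence they are the pairs of `α`. -/
theorem SepIn.exists_moves_pair (hR : SubdirectProd dot m R) (hα : IsCong (dot i) (m i) α)
    (hβ : IsCong (dot i) (m i) β) (hαβ : PrimeCov (IsCong (dot i) (m i)) α β)
    (hδ : IsCong (dot j) (m j) δ) (hsep : SepIn dot m R i α β j γ δ) {a b : F i}
    (hab : β a b) (hnab : ¬ α a b) :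
    ∃ q, RPol dot m R q ∧ PolMaps (q j) δ γ ∧ ¬ α (q i a) (q i b) := by
  let Λ : F i → F i → Prop := fun u v =>
    β u v ∧ ∀ q, RPol dot m R q → PolMaps (q j) δ γ → α (q i u) (q i v)
  have hΛcong : IsCong (dot i) (m i) Λ := by
    refine isCong_of_forall_basicTranslation hR
      ⟨fun u => ⟨hβ.refl u, fun _ _ _ => hα.refl _⟩,
        fun h => ⟨hβ.symm h.1, fun q hq hqδ => hα.symm (h.2 q hq hqδ)⟩,
        fun h h' => ⟨hβ.trans h.1 h'.1,
          fun q hq hqδ => hα.trans (h.2 q hq hqδ) (h'.2 q hq hqδ)⟩⟩ ?_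
    rintro τ hτ u v ⟨huv, hfix⟩
    exact ⟨hτ.rpol.polMaps hβ _ _ huv, fun q hq hqδ =>
      hfix _ (hq.comp hτ.rpol) fun x y hxy => hqδ _ _ (hτ.rpol.polMaps hδ _ _ hxy)⟩
  rcases hαβ.2.2 Λ hΛcong (fun u v h => ⟨hαβ.1 u v h, fun q hq _ => hq.polMaps hα _ _ h⟩)
    (fun _ _ h => h.1) with hΛα | hΛβ
  · by_contra! hfix
    exact hnab (hΛα ▸ ⟨hab, hfix⟩ : α a b)
  · obtain ⟨p, hp, hpβ, hpδ⟩ := hsep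
    exact (hpβ fun u v huv => (hΛβ ▸ huv : Λ u v).2 p hp hpδ).elim

theorem exists_maxCollapser_fixing (hR : SubdirectProd dot m R) (hσi : IsSBM (dot i) (m i) (σ i))
    (hσj : IsSBM (dot j) (m j) (σ j)) (hα : IsCong (dot i) (m i) α)
    (hβ : IsCong (dot i) (m i) β) (hαβ : PrimeCov (IsCong (dot i) (m i)) α β)
    (hβθ : RelLE β (ThetaA (dot i) (σ i))) (hγ : IsCong (dot j) (m j) γ)
    {s : ∀ k, F k} (hs : s ∈ R) (hsi : InMax (dot i) (σ i) (s i))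
    (hsj : InMax (dot j) (σ j) (s j)) {a b : F i} (hab : β a b) (hnab : ¬ α a b)
    (hmove : ∃ r, RPol dot m R r ∧ PolMaps (r j) δ γ ∧ ¬ α (r i a) (r i b)) :
    ∃ e, MaxCollapser dot m σ R i j γ δ e ∧ α (e i a) a ∧ α (e i b) b := by
  obtain ⟨r, hr, hrδ, hrab⟩ := hmove
  have hrmax := inMax_of_not_rel hβθ hα.1 (hr.polMaps hβ _ _ hab) hrab
  have hfix_r : FixRel dot m σ R i j α γ δ a b (r i a) (r i b) :=
    .inr ⟨_, maxCollapser_dot_const hσi hσj hγ hr hrδ hs hsi hsj,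
      by rw [hσi.dot_eq_self_of_inMax hrmax.1]; exact hα.refl _,
      by rw [hσi.dot_eq_self_of_inMax hrmax.2]; exact hα.refl _⟩
  have hle : RelLE (FixRel dot m σ R i j α γ δ a b) β := by
    rintro u v (huv | ⟨q, hq, hu, hv⟩)
    · exact hαβ.1 u v huv
    · exact hβ.trans (hαβ.1 _ _ hu)
        (hβ.trans (hq.1.polMaps hβ _ _ hab) (hβ.symm (hαβ.1 _ _ hv)))
  rcases hαβ.2.2 _ (isCong_fixRel hR hσi hσj hα hγ a b) (fun _ _ => .inl) hle with h | h
  · exact absurd (h ▸ hfix_r) hrab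
  · rcases (h ▸ hab : FixRel dot m σ R i j α γ δ a b a b) with h' | ⟨e, he, ha, hb⟩
    exacts [absurd h' hnab, ⟨e, he, hα.symm ha, hα.symm hb⟩]

/-- As `e` is `≡_α` the identity on `Q z₁, Q z₂` and maps the `δ`-class of `d` into one
`γ`-class, the Mal'tsev identities in `max` make `m(Q x, e(Q x), e(d))` constant modulo `α`
on `z₁, z₂` and the identity modulo `γ` near `d`. -/
theorem exists_collapse_step (hR : SubdirectProd dot m R)
    (hσi : IsSBM (dot i) (m i) (σ i)) (hσj : IsSBM (dot j) (m j) (σ j))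
    (hα : IsCong (dot i) (m i) α) (hγ : IsCong (dot j) (m j) γ)
    (hδ : IsCong (dot j) (m j) δ) (hγδ : RelLE γ δ) (hδθ : RelLE δ (ThetaA (dot j) (σ j)))
    {d : F j} (hd : InMax (dot j) (σ j) d) {Q : ∀ k, F k → F k} (hQ : RPol dot m R Q)
    (hQd : ∀ y, δ y d → γ (Q j y) y) {e : ∀ k, F k → F k}
    (he : MaxCollapser dot m σ R i j γ δ e) {z₁ z₂ : F i}
    (hz₁ : InMax (dot i) (σ i) (Q i z₁)) (hz₂ : InMax (dot i) (σ i) (Q i z₂))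
    (he₁ : α (e i (Q i z₁)) (Q i z₁)) (he₂ : α (e i (Q i z₂)) (Q i z₂)) :
    ∃ Q', RPol dot m R Q' ∧ (∀ y, δ y d → γ (Q' j y) y) ∧ α (Q' i z₁) (Q' i z₂) ∧
      ∀ u v, α (Q i u) (Q i v) → α (Q' i u) (Q' i v) := by
  obtain ⟨heR, heδ, hei, hej⟩ := he
  obtain ⟨t, ht, rfl⟩ := hR.2.2.2 j d
  have hcollapse : ∀ z, InMax (dot i) (σ i) (Q i z) → α (e i (Q i z)) (Q i z) →
      α (m i (Q i z) (e i (Q i z)) (e i (t i))) (e i (t i)) := fun z hz hez => by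
    calc α (m i (Q i z) (e i (Q i z)) (e i (t i))) (m i (Q i z) (Q i z) (e i (t i))) :=
          hα.m_congr (hα.refl _) hez (hα.refl _)
      _ = e i (t i) := by rw [hσi.m_eq_right_of_inMax (hei _) hz]
  refine ⟨fun k x => m k (Q k x) (e k (Q k x)) (e k (t k)),
    .mc hQ (heR.comp hQ) (.const _ (heR.apply_mem hR ht)), fun y hy => ?_,
    hα.trans (hcollapse z₁ hz₁ he₁) (hα.symm (hcollapse z₂ hz₂ he₂)),
    fun u v h => hα.m_congr h (heR.polMaps hα _ _ h) (hα.refl _)⟩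
  have hQy : δ (Q j y) (t j) := hδ.trans (hγδ _ _ (hQd y hy)) hy
  refine hγ.trans ?_ (hQd y hy)
  calc γ (m j (Q j y) (e j (Q j y)) (e j (t j))) (m j (Q j y) (e j (t j)) (e j (t j))) :=
        hγ.m_congr (hγ.refl _) (heδ _ _ hQy) (hγ.refl _)
    _ = Q j y := by rw [hσj.m_eq_left_of_inMax (inMax_of_thetaA (hδθ _ _ hQy) hd) (hej _)]

theorem exists_rpol_collapsing [Finite (F i)] (hR : SubdirectProd dot m R)
    (hσi : IsSBM (dot i) (m i) (σ i)) (hσj : IsSBM (dot j) (m j) (σ j))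
    (hα : IsCong (dot i) (m i) α) (hβ : IsCong (dot i) (m i) β)
    (hβθ : RelLE β (ThetaA (dot i) (σ i))) (hγ : IsCong (dot j) (m j) γ)
    (hδ : IsCong (dot j) (m j) δ) (hγδ : RelLE γ δ) (hδθ : RelLE δ (ThetaA (dot j) (σ j)))
    {d : F j} (hd : InMax (dot j) (σ j) d)
    (hfix : ∀ a b, β a b → ¬ α a b →
      ∃ e, MaxCollapser dot m σ R i j γ δ e ∧ α (e i a) a ∧ α (e i b) b) :
    ∃ Q, RPol dot m R Q ∧ (∀ y, δ y d → γ (Q j y) y) ∧ PolMaps (Q i) β α := by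
  let bad : (∀ k, F k → F k) → Set (F i × F i) := fun Q =>
    {z | β z.1 z.2 ∧ ¬ α (Q i z.1) (Q i z.2)}
  obtain ⟨_, ⟨Q, ⟨hQ, hQd⟩, rfl⟩, hmin⟩ := wellFounded_lt.has_min
    (bad '' {Q | RPol dot m R Q ∧ ∀ y, δ y d → γ (Q j y) y})
    ⟨_, _, ⟨RPol.id, fun y _ => hγ.refl y⟩, rfl⟩
  refine ⟨Q, hQ, hQd, fun u v huv => ?_⟩
  by_contra hnuv
  have hQuv := hQ.polMaps hβ _ _ huv
  obtain ⟨hu, hv⟩ := inMax_of_not_rel hβθ hα.1 hQuv hnuv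
  obtain ⟨e, he, heu, hev⟩ := hfix _ _ hQuv hnuv
  obtain ⟨Q', hQ', hQ'd, hQ'uv, hmono⟩ :=
    exists_collapse_step hR hσi hσj hα hγ hδ hγδ hδθ hd hQ hQd he hu hv heu hev
  have hsub : bad Q' ⊆ bad Q := fun z hz => ⟨hz.1, fun h => hz.2 (hmono _ _ h)⟩
  exact hmin _ ⟨Q', ⟨hQ', hQ'd⟩, rfl⟩
    ((Set.ssubset_iff_of_subset hsub).2 ⟨(u, v), ⟨huv, hnuv⟩, fun h => h.2 hQ'uv⟩)

end Separation

theorem separation_symmetric_general {n : ℕ} {F : Fin n → Type*}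
    [∀ i, Fintype (F i)]
    (dot : ∀ i, F i → F i → F i) (m : ∀ i, F i → F i → F i → F i)
    (σ : ∀ i, F i → F i → Prop)
    (hsbm : ∀ i, IsSBM (dot i) (m i) (σ i))
    (R : Set (∀ i, F i)) (hR : SubdirectProd dot m R)
    (i j : Fin n)
    (α β : F i → F i → Prop) (hi : InIR dot m σ i α β)
    (γ δ : F j → F j → Prop) (hj : InIR dot m σ j γ δ)
    (hsep : SepIn dot m R i α β j γ δ) :
    SepIn dot m R j γ δ i α β := by
  obtain ⟨hα, hβ, hαβ, hβθ⟩ := hi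
  obtain ⟨hγ, hδ, hγδ, hδθ⟩ := hj
  obtain ⟨d, d', hdd', hndd'⟩ := hγδ.exists_rel_not_rel
  obtain ⟨w, w', hww', hnww'⟩ := hαβ.exists_rel_not_rel
  have hd := (inMax_of_not_rel hδθ hγ.1 hdd' hndd').1
  obtain ⟨s, hs, hsi, hsj⟩ := exists_mem_inMax_inMax hR (hsbm i) (hsbm j)
    (inMax_of_not_rel hβθ hα.1 hww' hnww').1 hd
  obtain ⟨Q, hQ, hQd, hQβ⟩ := exists_rpol_collapsing hR (hsbm i) (hsbm j) hα hβ hβθ hγ hδ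
    hγδ.1 hδθ hd fun a b hab hnab =>
      exists_maxCollapser_fixing hR (hsbm i) (hsbm j) hα hβ hαβ hβθ hγ hs hsi hsj hab hnab
        (hsep.exists_moves_pair hR hα hβ hαβ hδ hab hnab)
  refine ⟨Q, hQ, fun hQδ => hndd' ?_, hQβ⟩
  exact hγ.trans (hγ.symm (hQd d (hδ.refl d)))
    (hγ.trans (hQδ _ _ hdd') (hQd d' (hδ.symm hdd')))

/-- Separation of prime intervals in a subdirect product of SBM algebras is symmetric:
if `(α,β)` at coordinate `i` can be separated from `(γ,δ)` at coordinate `j`, then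
`(γ,δ)` can be separated from `(α,β)`. -/
theorem separation_symmetric {n : ℕ} {F : Fin n → Type*}
    [∀ i, Fintype (F i)] [∀ i, Nonempty (F i)]
    (dot : ∀ i, F i → F i → F i) (m : ∀ i, F i → F i → F i → F i)
    (σ : ∀ i, F i → F i → Prop)
    (hsbm : ∀ i, IsSBM (dot i) (m i) (σ i))
    (R : Set (∀ i, F i)) (hR : SubdirectProd dot m R)
    (i j : Fin n) (hij : i ≠ j)
    (α β : F i → F i → Prop) (hi : InIR dot m σ i α β)
    (γ δ : F j → F j → Prop) (hj : InIR dot m σ j γ δ)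
    (hsep : SepIn dot m R i α β j γ δ) :
    SepIn dot m R j γ δ i α β :=
  separation_symmetric_general dot m σ hsbm R hR i j α β hi γ δ hj hsep

end SBMPaper
end
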